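/- arXiv:1712.06521 — 13 statements merged into one kernel-verified Lean document; each statement's English description precedes it below -/
import Mathlib

section
/- The magma Q defined on W × V by (a,u)(b,v) = (a+b, u(1+b) + v(1-a)) is a quasigroup: for each fixed (a,u), both the left translation (b,v) ↦ (a,u)(b,v) and the right translation (b,v) ↦ (b,v)(a,u) are bijections of W × V. Explicitly, the left division is (a,u)\(b,v) = (b-a, (v - u(1+b-a))(1-a)^{-1}) and the right division is (b,v)/(a,u) = (b-a, (v - u(1-(b-a)))(1+a)^{-1}). -/
/-- Multiplication of the loop `Q_{R,V}(W)` on `W × V`: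
`(a,u)(b,v) = (a+b, u(1+b) + v(1-a))`. -/
def qmul {R : Type*} [CommRing R] {V : Type*} [AddCommGroup V] [Module R V]
    (W : AddSubgroup (Module.End R V)) (p q : ↥W × V) : ↥W × V :=
  (p.1 + q.1,
    (1 + (q.1 : Module.End R V)) p.2 + (1 - (p.1 : Module.End R V)) q.2)

lemma end_inv_cancel {R : Type*} [CommRing R] {V : Type*} [AddCommGroup V] [Module R V]
    (f : Module.End R V) (h : IsUnit f) (x : V) : f (Ring.inverse f x) = x := by
  have : (f * Ring.inverse f) x = (1 : Module.End R V) x := by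
    rw [Ring.mul_inverse_cancel f h]
  simpa [Module.End.mul_apply] using this

lemma end_inv_cancel' {R : Type*} [CommRing R] {V : Type*} [AddCommGroup V] [Module R V]
    (f : Module.End R V) (h : IsUnit f) (x : V) : Ring.inverse f (f x) = x := by
  have : (Ring.inverse f * f) x = (1 : Module.End R V) x := by
    rw [Ring.inverse_mul_cancel f h]
  simpa [Module.End.mul_apply] using this

/-- `Q_{R,V}(W)` is a quasigroup: all left and right translations are
bijections, and the divisions are given explicitly by
`(a,u)\(b,v) = (b-a, (v - u(1+b-a))(1-a)⁻¹)` and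
`(b,v)/(a,u) = (b-a, (v - u(1-(b-a)))(1+a)⁻¹)`. -/
theorem stmt1 {R : Type*} [CommRing R] {V : Type*} [AddCommGroup V] [Module R V]
    (W : AddSubgroup (Module.End R V))
    (hcomm : ∀ a b : W, (a : Module.End R V) * b = (b : Module.End R V) * a)
    (hinv : ∀ a : W, IsUnit (1 + (a : Module.End R V))) :
    (∀ p : ↥W × V, Function.Bijective (qmul W p)) ∧
    (∀ p : ↥W × V, Function.Bijective (fun q => qmul W q p)) ∧
    (∀ (a b : ↥W) (u v : V),
      qmul W (a, u)
        (b - a, Ring.inverse (1 - (a : Module.End R V))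
          (v - (1 + ((b : Module.End R V) - (a : Module.End R V))) u)) = (b, v)) ∧
    (∀ (a b : ↥W) (u v : V),
      qmul W
        (b - a, Ring.inverse (1 + (a : Module.End R V))
          (v - (1 - ((b : Module.End R V) - (a : Module.End R V))) u)) (a, u) = (b, v)) := by
  have hinv' : ∀ a : W, IsUnit (1 - (a : Module.End R V)) := by
    intro a
    have := hinv (-a)
    simpa [sub_eq_add_neg] using this
  have hldiv : ∀ (a b : ↥W) (u v : V),
      qmul W (a, u)
        (b - a, Ring.inverse (1 - (a : Module.End R V))
          (v - (1 + ((b : Module.End R V) - (a : Module.End R V))) u)) = (b, v) := by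
    intro a b u v
    unfold qmul
    ext
    · simp
    · simp only [AddSubgroup.coe_sub]
      rw [end_inv_cancel _ (hinv' a)]
      abel
  have hrdiv : ∀ (a b : ↥W) (u v : V),
      qmul W
        (b - a, Ring.inverse (1 + (a : Module.End R V))
          (v - (1 - ((b : Module.End R V) - (a : Module.End R V))) u)) (a, u) = (b, v) := by
    intro a b u v
    unfold qmul
    ext
    · simp
    · simp only [AddSubgroup.coe_sub]
      rw [end_inv_cancel _ (hinv a)]
      abel
  refine ⟨?_, ?_, hldiv, hrdiv⟩
  · intro p
    obtain ⟨a, u⟩ := p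
    rw [Function.bijective_iff_has_inverse]
    refine ⟨fun q => (q.1 - a, Ring.inverse (1 - (a : Module.End R V))
      (q.2 - (1 + ((q.1 : Module.End R V) - (a : Module.End R V))) u)), ?_, ?_⟩
    · rintro ⟨b, v⟩
      unfold qmul
      ext
      · simp
      · simp only [AddSubgroup.coe_add, add_sub_cancel_left]
        rw [end_inv_cancel' _ (hinv' a)]
    · rintro ⟨b, v⟩
      exact hldiv a b u v
  · intro p
    obtain ⟨a, u⟩ := p
    rw [Function.bijective_iff_has_inverse]
    refine ⟨fun q => (q.1 - a, Ring.inverse (1 + (a : Module.End R V))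
      (q.2 - (1 - ((q.1 : Module.End R V) - (a : Module.End R V))) u)), ?_, ?_⟩
    · rintro ⟨b, v⟩
      unfold qmul
      ext
      · simp
      · simp only [AddSubgroup.coe_add, add_sub_cancel_right]
        rw [end_inv_cancel' _ (hinv a)]
    · rintro ⟨b, v⟩
      exact hrdiv a b u v
end

section
/- For every d in the group of invertible elements of the centralizer C_E(W) = {a ∈ E : ab = ba for all b ∈ W} and every x ∈ V, the map f_{(d,x)} : Q → Q defined by (a,u) ↦ (a, x·a + u·d) is an automorphism of the loop Q = Q_{R,V}(W). (Here x·a denotes the image of x under the endomorphism a, and u·d the image of u under d.) -/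
/-- for every invertible `d` in the centralizer `C_E(W)` and every `x ∈ V`,
the map `f_{(d,x)} : (a,u) ↦ (a, x·a + u·d)` is an automorphism of `Q_{R,V}(W)`. -/
theorem stmt3 {R : Type*} [CommRing R] {V : Type*} [AddCommGroup V] [Module R V]
    (W : AddSubgroup (Module.End R V))
    (hcomm : ∀ a b : W, (a : Module.End R V) * b = (b : Module.End R V) * a)
    (hinv : ∀ a : W, IsUnit (1 + (a : Module.End R V)))
    (d : Module.End R V) (hd : ∀ b : W, d * (b : Module.End R V) = (b : Module.End R V) * d)
    (hdu : IsUnit d) (x : V) :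
    Function.Bijective (fun p : ↥W × V => ((p.1, (p.1 : Module.End R V) x + d p.2) : ↥W × V)) ∧
    (∀ p q : ↥W × V,
      (fun p : ↥W × V => ((p.1, (p.1 : Module.End R V) x + d p.2) : ↥W × V)) (qmul W p q) =
      qmul W ((fun p : ↥W × V => ((p.1, (p.1 : Module.End R V) x + d p.2) : ↥W × V)) p)
        ((fun p : ↥W × V => ((p.1, (p.1 : Module.End R V) x + d p.2) : ↥W × V)) q)) := by
  obtain ⟨du, hdu'⟩ := hdu
  constructor
  · constructor
    · rintro ⟨a, u⟩ ⟨b, v⟩ h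
      simp only [Prod.mk.injEq] at h
      obtain ⟨h1, h2⟩ := h
      subst h1
      have h3 : d u = d v := add_left_cancel h2
      have : (↑du⁻¹ * d) u = (↑du⁻¹ * d) v := by
        simp [Module.End.mul_apply, h3]
      rw [← hdu', Units.inv_mul, Module.End.one_apply, Module.End.one_apply] at this
      rw [this]
    · rintro ⟨a, u⟩
      refine ⟨(a, (↑du⁻¹ : Module.End R V) (u - (a : Module.End R V) x)), ?_⟩
      simp only [Prod.mk.injEq, true_and]
      have : d ((↑du⁻¹ : Module.End R V) (u - (a : Module.End R V) x))
          = u - (a : Module.End R V) x := by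
        conv_lhs => rw [← hdu']
        rw [← Module.End.mul_apply, Units.mul_inv, Module.End.one_apply]
      rw [this]; abel
  · rintro ⟨a, u⟩ ⟨b, v⟩
    simp only [qmul, Prod.mk.injEq, true_and]
    have hdb : d ((b : Module.End R V) u) = (b : Module.End R V) (d u) := by
      rw [← Module.End.mul_apply, hd b, Module.End.mul_apply]
    have hda : d ((a : Module.End R V) v) = (a : Module.End R V) (d v) := by
      rw [← Module.End.mul_apply, hd a, Module.End.mul_apply]
    have hab : (b : Module.End R V) ((a : Module.End R V) x)
        = (a : Module.End R V) ((b : Module.End R V) x) := by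
      rw [← Module.End.mul_apply, hcomm b a, Module.End.mul_apply]
    simp only [AddSubgroup.coe_add, LinearMap.add_apply, Module.End.one_apply,
      LinearMap.sub_apply, map_add, map_sub, hdb, hda, hab]
    abel
end

section
/- In the loop Q = Q_{R,V}(W), for every (a,u), (b,v) ∈ Q the inner mapping T_{(a,u)} (conjugation: z ↦ ((a,u)·z)·(a,u) read as z ↦ L_{(a,u)}^{-1}(z R_{(a,u)})) is given explicitly by (b,v) ↦ (b, (-2u(1-a)^{-1})·b + v·(1+a)(1-a)^{-1}), and is an automorphism of Q. -/
/-- The explicit form of the inner mapping `T_{(a,u)}`: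
`(b,v) ↦ (b, (-2u(1-a)⁻¹)·b + v·(1+a)(1-a)⁻¹)`. -/
noncomputable def Tmap {R : Type*} [CommRing R] {V : Type*} [AddCommGroup V] [Module R V]
    (W : AddSubgroup (Module.End R V)) (a : ↥W) (u : V) (q : ↥W × V) : ↥W × V :=
  (q.1,
    (q.1 : Module.End R V) (-(2 • (Ring.inverse (1 - (a : Module.End R V)) u))) +
      ((1 + (a : Module.End R V)) * Ring.inverse (1 - (a : Module.End R V))) q.2)

/-- in `Q_{R,V}(W)`, the inner mapping `T_{(a,u)} = R_{(a,u)} L_{(a,u)}^{-1}`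
is given by the explicit formula `Tmap` (i.e. `(a,u)·(z T) = z·(a,u)` for all `z`), and it
is an automorphism of the loop. -/
theorem stmt4 {R : Type*} [CommRing R] {V : Type*} [AddCommGroup V] [Module R V]
    (W : AddSubgroup (Module.End R V))
    (hcomm : ∀ a b : W, (a : Module.End R V) * b = (b : Module.End R V) * a)
    (hinv : ∀ a : W, IsUnit (1 + (a : Module.End R V)))
    (a : ↥W) (u : V) :
    (∀ z : ↥W × V, qmul W (a, u) (Tmap W a u z) = qmul W z (a, u)) ∧
    Function.Bijective (Tmap W a u) ∧
    (∀ p q : ↥W × V, Tmap W a u (qmul W p q) = qmul W (Tmap W a u p) (Tmap W a u q)) := by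
  set e : Module.End R V := (a : Module.End R V) with he
  have hu1 : IsUnit (1 - e) := by rw [he]; simpa [sub_eq_add_neg] using hinv (-a)
  have hu2 : IsUnit (1 + e) := by rw [he]; exact hinv a
  set s : Module.End R V := Ring.inverse (1 - e) with hsdef
  set t : Module.End R V := Ring.inverse (1 + e) with htdef
  have hs1 : (1 - e) * s = 1 := Ring.mul_inverse_cancel _ hu1
  have hs2 : s * (1 - e) = 1 := Ring.inverse_mul_cancel _ hu1
  have ht1 : (1 + e) * t = 1 := Ring.mul_inverse_cancel _ hu2
  have ht2 : t * (1 + e) = 1 := Ring.inverse_mul_cancel _ hu2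
  have hbe : ∀ b : W, (b : Module.End R V) * e = e * (b : Module.End R V) := by
    intro b; rw [he]; exact (hcomm a b).symm
  have hb1e : ∀ b : W, (b : Module.End R V) * (1 - e) = (1 - e) * (b : Module.End R V) := by
    intro b; rw [mul_sub, sub_mul, mul_one, one_mul, hbe b]
  have hcs : ∀ b : W, (b : Module.End R V) * s = s * (b : Module.End R V) := by
    intro b
    calc (b : Module.End R V) * s
        = s * ((1 - e) * ((b : Module.End R V) * s)) := by
          rw [← mul_assoc, hs2, one_mul]
      _ = s * ((1 - e) * (b : Module.End R V) * s) := by rw [mul_assoc (1 - e)]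
      _ = s * ((b : Module.End R V) * (1 - e) * s) := by rw [hb1e b]
      _ = s * ((b : Module.End R V) * ((1 - e) * s)) := by rw [mul_assoc _ (1 - e) s]
      _ = s * (b : Module.End R V) := by rw [hs1, mul_one]
  set M : Module.End R V := (1 + e) * s with hM
  set N : Module.End R V := (1 - e) * t with hN
  have hbM : ∀ b : W, (b : Module.End R V) * M = M * (b : Module.End R V) := by
    intro b
    have hb1 : (b : Module.End R V) * (1 + e) = (1 + e) * (b : Module.End R V) := by
      rw [mul_add, add_mul, mul_one, one_mul, hbe b]
    calc (b : Module.End R V) * ((1 + e) * s)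
        = (b : Module.End R V) * (1 + e) * s := by rw [mul_assoc]
      _ = (1 + e) * (b : Module.End R V) * s := by rw [hb1]
      _ = (1 + e) * ((b : Module.End R V) * s) := by rw [mul_assoc]
      _ = (1 + e) * (s * (b : Module.End R V)) := by rw [hcs b]
      _ = (1 + e) * s * (b : Module.End R V) := by rw [mul_assoc]
  have hMN : M * N = 1 := by
    rw [hM, hN, mul_assoc (1 + e) s ((1 - e) * t), ← mul_assoc s (1 - e) t, hs2, one_mul, ht1]
  have hNM : N * M = 1 := by
    rw [hM, hN, mul_assoc (1 - e) t ((1 + e) * s), ← mul_assoc t (1 + e) s, ht2, one_mul, hs1]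
  -- application-level lemmas
  have k1 : ∀ (b : W) (x : V), (1 - e) ((b : Module.End R V) (s x)) = (b : Module.End R V) x := by
    intro b x
    have h : (1 - e) * ((b : Module.End R V) * s) = (b : Module.End R V) := by
      rw [hcs b, ← mul_assoc, hs1, one_mul]
    calc (1 - e) ((b : Module.End R V) (s x)) = ((1 - e) * ((b : Module.End R V) * s)) x := rfl
      _ = (b : Module.End R V) x := by rw [h]
  have k2 : ∀ x : V, (1 - e) (M x) = (1 + e) x := by
    intro x
    have h : (1 - e) * M = 1 + e := by
      rw [hM, ← mul_assoc]
      have h2 : (1 - e) * (1 + e) = (1 + e) * (1 - e) := by noncomm_ring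
      rw [h2, mul_assoc, hs1, mul_one]
    calc (1 - e) (M x) = ((1 - e) * M) x := rfl
      _ = (1 + e) x := by rw [h]
  have kMN : ∀ x : V, M (N x) = x := by
    intro x
    calc M (N x) = (M * N) x := rfl
      _ = x := by rw [hMN]; rfl
  have kNM : ∀ x : V, N (M x) = x := by
    intro x
    calc N (M x) = (N * M) x := rfl
      _ = x := by rw [hNM]; rfl
  have kbM : ∀ (b : W) (x : V), (b : Module.End R V) (M x) = M ((b : Module.End R V) x) := by
    intro b x
    calc (b : Module.End R V) (M x) = ((b : Module.End R V) * M) x := rfl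
      _ = (M * (b : Module.End R V)) x := by rw [hbM b]
      _ = M ((b : Module.End R V) x) := rfl
  refine ⟨?_, ?_, ?_⟩
  · rintro ⟨b, v⟩
    simp only [qmul, Tmap, ← he, ← hsdef, ← hM, Prod.mk.injEq]
    refine ⟨add_comm _ _, ?_⟩
    simp only [map_add, map_neg, map_nsmul, k1, k2]
    simp only [LinearMap.add_apply, LinearMap.sub_apply, Module.End.one_apply]
    abel
  · refine Function.bijective_iff_has_inverse.mpr
      ⟨fun q => (q.1, N (q.2 + 2 • (q.1 : Module.End R V) (s u))), ?_, ?_⟩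
    · rintro ⟨b, v⟩
      simp only [Tmap, ← he, ← hsdef, ← hM, Prod.mk.injEq]
      refine ⟨trivial, ?_⟩
      simp only [map_add, map_neg, map_nsmul, kNM]
      abel
    · rintro ⟨b, v⟩
      simp only [Tmap, ← he, ← hsdef, ← hM, Prod.mk.injEq]
      refine ⟨trivial, ?_⟩
      simp only [map_add, map_neg, map_nsmul, kMN]
      abel
  · rintro ⟨b, v⟩ ⟨c, w⟩
    have hcb : ∀ x : V, (c : Module.End R V) ((b : Module.End R V) x)
        = (b : Module.End R V) ((c : Module.End R V) x) := by
      intro x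
      calc (c : Module.End R V) ((b : Module.End R V) x)
          = ((c : Module.End R V) * (b : Module.End R V)) x := rfl
        _ = ((b : Module.End R V) * (c : Module.End R V)) x := by rw [hcomm b c]
        _ = (b : Module.End R V) ((c : Module.End R V) x) := rfl
    simp only [qmul, Tmap, ← he, ← hsdef, ← hM, Prod.mk.injEq, AddSubgroup.coe_add]
    refine ⟨trivial, ?_⟩
    simp only [map_add, map_neg, map_nsmul, LinearMap.add_apply, LinearMap.sub_apply,
      Module.End.one_apply, map_sub, kbM, hcb]
    abel
end

section
/- In the loop Q = Q_{R,V}(W), for every (a,u), (b,v), (c,w) ∈ Q the inner mapping L_{(a,u),(b,v)} defined by z ↦ ((b,v)·((a,u)·z)) L_{(b,v)(a,u)}^{-1} is given explicitly by (c,w) ↦ (c, (-v·a·(1-(a+b))^{-1})·c + w·(1-a)(1-b)(1-(a+b))^{-1}), and is an automorphism of Q. -/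
/-- The explicit form of the inner mapping `L_{(a,u),(b,v)}`:
`(c,w) ↦ (c, (-v·a·(1-(a+b))⁻¹)·c + w·(1-a)(1-b)(1-(a+b))⁻¹)`. -/
noncomputable def Lmap {R : Type*} [CommRing R] {V : Type*} [AddCommGroup V] [Module R V]
    (W : AddSubgroup (Module.End R V)) (a b : ↥W) (u v : V) (z : ↥W × V) : ↥W × V :=
  (z.1,
    (z.1 : Module.End R V)
        (-(Ring.inverse (1 - ((a : Module.End R V) + (b : Module.End R V)))
            ((a : Module.End R V) v))) +
      ((1 - (a : Module.End R V)) * (1 - (b : Module.End R V)) *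
        Ring.inverse (1 - ((a : Module.End R V) + (b : Module.End R V)))) z.2)

section helpers
variable {R : Type*} [CommRing R] {V : Type*} [AddCommGroup V] [Module R V]

lemma comp2 (A B C s' : Module.End R V) (v u w : V)
    (h1 : (1 + C) * (1 + A) - (1 - (B + A)) * (C * (s' * A)) = 1 + (A + C))
    (h2 : (1 + C) * (1 - B) = (1 - B) * (1 + C))
    (h3 : (1 - (B + A)) * ((1 - A) * (1 - B) * s') = (1 - B) * (1 - A)) :
    (1 + C) ((1 + A) v + (1 - B) u) +
      (1 - (B + A)) (C (-(s' (A v))) + ((1 - A) * (1 - B) * s') w)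
      = (1 + (A + C)) v + (1 - B) ((1 + C) u + (1 - A) w) := by
  have e1 : ((1 + C) * (1 + A)) v - ((1 - (B + A)) * (C * (s' * A))) v = (1 + (A + C)) v := by
    rw [← LinearMap.sub_apply, h1]
  simp only [map_add, map_neg, ← Module.End.mul_apply] at *
  rw [h2, h3, ← e1]
  abel

lemma comp3 (C D K : Module.End R V) (t w x : V)
    (h1 : (1 + D) * C + (1 - C) * D = C + D)
    (h2 : (1 + D) * K = K * (1 + D)) (h3 : (1 - C) * K = K * (1 - C)) :
    (C + D) (-t) + K ((1 + D) w + (1 - C) x)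
      = (1 + D) (C (-t) + K w) + (1 - C) (D (-t) + K x) := by
  have e1 : ((1 + D) * C) (-t) + ((1 - C) * D) (-t) = (C + D) (-t) := by
    rw [← LinearMap.add_apply, h1]
  simp only [map_add, map_neg, ← Module.End.mul_apply] at *
  rw [← h2, ← h3, ← e1]
  abel

lemma commute_ringInverse {A B : Module.End R V} (h : Commute A B) (hu : IsUnit B) :
    Commute A (Ring.inverse B) := by
  have h2 : Commute A (hu.unit : Module.End R V) := by rw [hu.unit_spec]; exact h
  rw [← hu.unit_spec, Ring.inverse_unit]
  exact h2.units_inv_right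

end helpers

/-- in `Q_{R,V}(W)`, the inner mapping
`L_{(a,u),(b,v)} : z ↦ ((b,v)·((a,u)·z)) L_{(b,v)(a,u)}^{-1}` is given by the explicit
formula `Lmap` (i.e. `((b,v)(a,u))·(z Lmap) = (b,v)·((a,u)·z)` for all `z`), and it is an
automorphism of the loop. -/

theorem stmt5 {R : Type*} [CommRing R] {V : Type*} [AddCommGroup V] [Module R V]
    (W : AddSubgroup (Module.End R V))
    (hcomm : ∀ a b : W, (a : Module.End R V) * b = (b : Module.End R V) * a)
    (hinv : ∀ a : W, IsUnit (1 + (a : Module.End R V)))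
    (a b : ↥W) (u v : V) :
    (∀ z : ↥W × V,
      qmul W (qmul W (b, v) (a, u)) (Lmap W a b u v z) = qmul W (b, v) (qmul W (a, u) z)) ∧
    Function.Bijective (Lmap W a b u v) ∧
    (∀ p q : ↥W × V,
      Lmap W a b u v (qmul W p q) = qmul W (Lmap W a b u v p) (Lmap W a b u v q)) := by
  set E := Module.End R V
  have hcomm' : ∀ (c d : W), Commute (c : E) (d : E) := fun c d => hcomm c d
  set A : E := (a : E) with hA
  set B : E := (b : E) with hB
  -- units
  have unit_of : ∀ c : W, IsUnit (1 - (c : E)) := by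
    intro c
    have := hinv (-c)
    simpa [sub_eq_add_neg] using this
  have hsu : IsUnit (1 - (A + B)) := by
    have := unit_of (a + b)
    simpa using this
  set s' : E := Ring.inverse (1 - (A + B)) with hs'
  have hss' : (1 - (A + B)) * s' = 1 := Ring.mul_inverse_cancel _ hsu
  have hs's : s' * (1 - (A + B)) = 1 := Ring.inverse_mul_cancel _ hsu
  have hs'u : IsUnit s' := hsu.ringInverse
  have hCs' : ∀ c : W, Commute (c : E) s' := fun c =>
    commute_ringInverse ((Commute.one_right (c : E)).sub_right
      ((hcomm' c a).add_right (hcomm' c b))) hsu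
  set K : E := (1 - A) * (1 - B) * s' with hK
  have hKu : IsUnit K := ((unit_of a).mul (unit_of b)).mul hs'u
  have hcK : ∀ c : W, Commute (c : E) K := fun c =>
    (((Commute.one_right (c : E)).sub_right (hcomm' c a)).mul_right
      ((Commute.one_right (c : E)).sub_right (hcomm' c b))).mul_right (hCs' c)
  set t : V := s' (A v) with ht
  set K' : E := Ring.inverse K with hK'
  have hKK' : K * K' = 1 := Ring.mul_inverse_cancel _ hKu
  have hK'K : K' * K = 1 := Ring.inverse_mul_cancel _ hKu
  refine ⟨?_, ?_, ?_⟩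
  · -- first conjunct
    intro z
    set C : E := (z.1 : E) with hC
    have hCswap : (1 - (A + B)) * C = C * (1 - (A + B)) :=
      ((Commute.one_right C).sub_right ((hcomm' z.1 a).add_right (hcomm' z.1 b))).symm.eq
    have key : (1 - (A + B)) * (C * (s' * A)) = C * A := by
      rw [← mul_assoc, hCswap, mul_assoc C, ← mul_assoc (1 - (A + B)), hss', one_mul]
    have h1 : (1 + C) * (1 + A) - (1 - (B + A)) * (C * (s' * A)) = 1 + (A + C) := by
      rw [add_comm B A, key]; noncomm_ring
    have h2 : (1 + C) * (1 - B) = (1 - B) * (1 + C) :=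
      ((Commute.one_left (1 - B)).add_left
        ((Commute.one_right C).sub_right (hcomm' z.1 b))).eq
    have comS : ∀ x : E, Commute A x → Commute B x → Commute (1 - (A + B)) x := fun x hx1 hx2 =>
      (Commute.one_left x).sub_left (hx1.add_left hx2)
    have hsABc : Commute (1 - (A + B)) ((1 - A) * (1 - B)) :=
      (comS (1 - A) ((Commute.one_right A).sub_right (Commute.refl A))
        ((Commute.one_right B).sub_right (hcomm' b a))).mul_right
      (comS (1 - B) ((Commute.one_right A).sub_right (hcomm' a b))
        ((Commute.one_right B).sub_right (Commute.refl B)))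
    have hA1B1 : (1 - A) * (1 - B) = (1 - B) * (1 - A) :=
      (((Commute.one_left (1 - B)).sub_left
        ((Commute.one_right A).sub_right (hcomm' a b)))).eq
    have h3 : (1 - (B + A)) * ((1 - A) * (1 - B) * s') = (1 - B) * (1 - A) := by
      rw [add_comm B A, ← mul_assoc, hsABc.eq, mul_assoc, hss', mul_one, hA1B1]
    simp only [qmul, Lmap, Prod.mk.injEq, AddSubgroup.coe_add, ← hA, ← hB, ← hs', ← hC]
    exact ⟨add_assoc _ _ _, comp2 A B C s' v u z.2 h1 h2 h3⟩
  · -- bijective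
    have hKK'app : ∀ x : V, K (K' x) = x := fun x => by
      rw [← Module.End.mul_apply, hKK', Module.End.one_apply]
    have hK'Kapp : ∀ x : V, K' (K x) = x := fun x => by
      rw [← Module.End.mul_apply, hK'K, Module.End.one_apply]
    refine Function.bijective_iff_has_inverse.mpr
      ⟨fun z => (z.1, K' (z.2 + (z.1 : E) t)), ?_, ?_⟩
    · intro z
      simp only [Lmap, ← hA, ← hB, ← hs', ← ht, ← hK]
      refine Prod.ext rfl ?_
      show K' (((z.1 : E)) (-t) + K z.2 + (z.1 : E) t) = z.2
      have e : ((z.1 : E)) (-t) + K z.2 + (z.1 : E) t = K z.2 := by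
        rw [map_neg]; abel
      rw [e, hK'Kapp]
    · intro z
      simp only [Lmap, ← hA, ← hB, ← hs', ← ht, ← hK]
      refine Prod.ext rfl ?_
      show (z.1 : E) (-t) + K (K' (z.2 + (z.1 : E) t)) = z.2
      rw [hKK'app, map_neg]
      abel
  · -- homomorphism
    intro p q
    set C : E := (p.1 : E) with hC
    set D : E := (q.1 : E) with hD
    have h1 : (1 + D) * C + (1 - C) * D = C + D := by
      rw [add_mul, sub_mul, one_mul, one_mul, hcomm' q.1 p.1]
      abel
    have h2 : (1 + D) * K = K * (1 + D) :=
      ((Commute.one_left K).add_left (hcK q.1)).eq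
    have h3 : (1 - C) * K = K * (1 - C) :=
      ((Commute.one_left K).sub_left (hcK p.1)).eq
    simp only [qmul, Lmap, Prod.mk.injEq, AddSubgroup.coe_add, ← hA, ← hB, ← hs', ← ht, ← hK,
      ← hC, ← hD]
    exact ⟨trivial, comp3 C D K t p.2 q.2 h1 h2 h3⟩
end

section
/- The loop Q_{R,V}(W) is automorphic: every inner mapping of Q_{R,V}(W) is a loop automorphism. -/
private lemma qkey {R : Type*} [CommRing R] {V : Type*} [AddCommGroup V] [Module R V]
    (M a b : Module.End R V) (u v n : V) (hab : a * b = b * a)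
    (hMa : M * a = a * M) (hMb : M * b = b * M) :
    M ((1 + b) u + (1 - a) v) + (a + b) n = (1 + b) (M u + a n) + (1 - a) (M v + b n) := by
  have h1 := LinearMap.congr_fun hMb u
  have h2 := LinearMap.congr_fun hMa v
  have h3 := LinearMap.congr_fun hab n
  simp only [Module.End.mul_apply] at h1 h2 h3
  simp only [LinearMap.add_apply, LinearMap.sub_apply, Module.End.one_apply, map_add, map_sub,
    h1, h2, h3]
  abel

/-- the loop `Q_{R,V}(W)` is automorphic: every element of the inner mapping
group (the stabilizer of the identity `(0,0)` in the multiplication group, i.e. the group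
of permutations generated by all left and right translations) is an automorphism. -/
theorem stmt6 {R : Type*} [CommRing R] {V : Type*} [AddCommGroup V] [Module R V]
    (W : AddSubgroup (Module.End R V))
    (hcomm : ∀ a b : W, (a : Module.End R V) * b = (b : Module.End R V) * a)
    (hinv : ∀ a : W, IsUnit (1 + (a : Module.End R V))) :
    ∀ σ ∈ Subgroup.closure {σ : Equiv.Perm (↥W × V) |
        (∃ p, ∀ q, σ q = qmul W p q) ∨ (∃ p, ∀ q, σ q = qmul W q p)},
      σ ((0 : ↥W), (0 : V)) = (0, 0) →
        ∀ p q : ↥W × V, σ (qmul W p q) = qmul W (σ p) (σ q) := by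
  intro σ hσ
  have key : ∃ (c : W) (M : (Module.End R V)ˣ) (m n : V),
      (∀ a : W, (M : Module.End R V) * a = (a : Module.End R V) * M) ∧
      ∀ (x : W) (z : V), σ (x, z) =
        (x + c, (M : Module.End R V) z + m + (x : Module.End R V) n) := by
    induction hσ using Subgroup.closure_induction with
    | mem τ hτ =>
      rcases hτ with ⟨⟨a, u⟩, h⟩ | ⟨⟨b, v⟩, h⟩
      · -- left translation by (a,u): τ (x,z) = (a+x, (1+x) u + (1-a) z)
        refine ⟨a, (hinv (-a)).unit, u, u, ?_, ?_⟩
        · intro b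
          have h1 : ((hinv (-a)).unit : Module.End R V) = 1 + ((-a : W) : Module.End R V) :=
            (hinv (-a)).unit_spec
          rw [h1]
          push_cast
          rw [add_mul, mul_add, one_mul, mul_one, neg_mul, mul_neg, hcomm a b]
        · intro x z
          have h1 : ((hinv (-a)).unit : Module.End R V) = 1 + ((-a : W) : Module.End R V) :=
            (hinv (-a)).unit_spec
          rw [h (x, z), h1]
          simp only [qmul]
          push_cast
          refine Prod.ext (by simp [add_comm]) ?_
          simp only [LinearMap.add_apply, LinearMap.sub_apply, Module.End.one_apply,
            LinearMap.smul_apply, LinearMap.neg_apply]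
          abel
      · -- right translation by (b,v): τ (x,z) = (x+b, (1+b) z + (1-x) v)
        refine ⟨b, (hinv b).unit, v, -v, ?_, ?_⟩
        · intro a
          have h1 : ((hinv b).unit : Module.End R V) = 1 + (b : Module.End R V) :=
            (hinv b).unit_spec
          rw [h1]
          rw [add_mul, mul_add, one_mul, mul_one, hcomm b a]
        · intro x z
          have h1 : ((hinv b).unit : Module.End R V) = 1 + (b : Module.End R V) :=
            (hinv b).unit_spec
          rw [h (x, z), h1]
          simp only [qmul]
          refine Prod.ext rfl ?_
          simp only [LinearMap.add_apply, LinearMap.sub_apply, Module.End.one_apply, map_neg]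
          abel
    | one => exact ⟨0, 1, 0, 0, by simp, by simp⟩
    | mul τ ρ _ _ ihτ ihρ =>
      obtain ⟨c, M, m, n, hM, h⟩ := ihτ
      obtain ⟨c', M', m', n', hM', h'⟩ := ihρ
      refine ⟨c' + c, M * M',
        (M : Module.End R V) m' + m + (c' : Module.End R V) n,
        (M : Module.End R V) n' + n, ?_, ?_⟩
      · intro a
        rw [Units.val_mul, mul_assoc, hM' a, ← mul_assoc, hM a, mul_assoc]
      · intro x z
        rw [Equiv.Perm.mul_apply, h' x z, h (x + c') ((M' : Module.End R V) z + m'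
          + (x : Module.End R V) n')]
        have hx := LinearMap.congr_fun (hM x) n'
        simp only [Module.End.mul_apply] at hx
        refine Prod.ext (by simp [add_assoc, add_comm c c']) ?_
        simp only [Units.val_mul, Module.End.mul_apply, map_add, hx, AddSubgroup.coe_add,
          LinearMap.add_apply]
        abel
    | inv τ _ ihτ =>
      obtain ⟨c, M, m, n, hM, h⟩ := ihτ
      have hMinv : ∀ a : W, ((M⁻¹ : (Module.End R V)ˣ) : Module.End R V) * a
          = (a : Module.End R V) * (M⁻¹ : (Module.End R V)ˣ) := by
        intro a
        exact (Commute.units_inv_left (hM a)).eq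
      refine ⟨-c, M⁻¹,
        -(((M⁻¹ : (Module.End R V)ˣ) : Module.End R V) m)
          + (c : Module.End R V) (((M⁻¹ : (Module.End R V)ˣ) : Module.End R V) n),
        -(((M⁻¹ : (Module.End R V)ˣ) : Module.End R V) n), hMinv, ?_⟩
      intro x z
      have : (x, z) = τ (x + -c,
          ((M⁻¹ : (Module.End R V)ˣ) : Module.End R V) z
            + (-(((M⁻¹ : (Module.End R V)ˣ) : Module.End R V) m)
              + (c : Module.End R V) (((M⁻¹ : (Module.End R V)ˣ) : Module.End R V) n))
            + (x : Module.End R V) (-(((M⁻¹ : (Module.End R V)ˣ) : Module.End R V) n))) := by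
        rw [h]
        have hz := LinearMap.congr_fun (M.mul_inv) z
        have hn := LinearMap.congr_fun (M.mul_inv) n
        have hm2 := LinearMap.congr_fun (M.mul_inv) m
        have hcM := LinearMap.congr_fun (hM c) (((M⁻¹ : (Module.End R V)ˣ) : Module.End R V) n)
        have hxM := LinearMap.congr_fun (hM x) (((M⁻¹ : (Module.End R V)ˣ) : Module.End R V) n)
        simp only [Module.End.mul_apply, Module.End.one_apply] at hz hn hm2 hcM hxM
        refine Prod.ext (by simp) ?_
        simp only [map_add, map_neg, hz, hm2, hcM, hxM, hn, AddSubgroup.coe_add, AddSubgroup.coe_neg,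
          LinearMap.add_apply, LinearMap.neg_apply]
        abel
      rw [this, ← Equiv.Perm.mul_apply, inv_mul_cancel, Equiv.Perm.one_apply]
  obtain ⟨c, M, m, n, hM, h⟩ := key
  intro hfix
  have h0 := h 0 0
  rw [hfix] at h0
  simp only [zero_add, map_zero, ZeroMemClass.coe_zero, LinearMap.zero_apply, add_zero] at h0
  obtain ⟨hc, hm⟩ := Prod.mk.injEq .. |>.mp h0
  intro p q
  obtain ⟨a, u⟩ := p
  obtain ⟨b, v⟩ := q
  have h1 := h a u
  have h2 := h b v
  simp only [qmul] at *
  rw [h (a + b) ((1 + (b : Module.End R V)) u + (1 - (a : Module.End R V)) v), h1, h2,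
    ← hc, ← hm]
  simp only [add_zero, zero_add, AddSubgroup.coe_add]
  exact Prod.ext rfl (qkey (M : Module.End R V) a b u v n (hcomm a b) (hM a) (hM b))
end

section
/- In the loop Q = Q_{R,V}(W), the associator of (a,u), (b,v), (c,w), i.e., the unique element [x,y,z] with (xy)z = [x,y,z]·(x(yz)), equals (0, (u·bc - w·ab)(1+a+b+c)^{-1}). In particular every associator lies in 0 × V. -/
/-- in `Q_{R,V}(W)` the associator of `(a,u), (b,v), (c,w)`, i.e. the unique
element `s` with `(xy)z = s·(x(yz))`, equals `(0, (u·bc - w·ab)(1+a+b+c)⁻¹)`; in particular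
every associator lies in `0 × V`. -/
theorem stmt7 {R : Type*} [CommRing R] {V : Type*} [AddCommGroup V] [Module R V]
    (W : AddSubgroup (Module.End R V))
    (hcomm : ∀ a b : W, (a : Module.End R V) * b = (b : Module.End R V) * a)
    (hinv : ∀ a : W, IsUnit (1 + (a : Module.End R V)))
    (a b c : ↥W) (u v w : V) :
    qmul W
        ((0 : ↥W), Ring.inverse (1 + ((a : Module.End R V) + b + c))
          (((b : Module.End R V) * c) u - ((a : Module.End R V) * b) w))
        (qmul W (a, u) (qmul W (b, v) (c, w))) =
      qmul W (qmul W (a, u) (b, v)) (c, w) ∧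
    ∀ s : ↥W × V,
      qmul W s (qmul W (a, u) (qmul W (b, v) (c, w))) = qmul W (qmul W (a, u) (b, v)) (c, w) →
        s = ((0 : ↥W), Ring.inverse (1 + ((a : Module.End R V) + b + c))
          (((b : Module.End R V) * c) u - ((a : Module.End R V) * b) w)) := by
  set A := (a : Module.End R V)
  set B := (b : Module.End R V)
  set C := (c : Module.End R V)
  set e : Module.End R V := 1 + (A + B + C) with he_def
  have he : IsUnit e := by
    have := hinv (a + b + c)
    simpa [he_def, add_assoc] using this
  set D : V := (B * C) u - (A * B) w with hD
  have hED : e (Ring.inverse e D) = D := by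
    rw [← Module.End.mul_apply, Ring.mul_inverse_cancel e he, Module.End.one_apply]
  have hDE : ∀ x : V, Ring.inverse e (e x) = x := fun x => by
    rw [← Module.End.mul_apply, Ring.inverse_mul_cancel e he, Module.End.one_apply]
  have hAC : ∀ x : V, A (C x) = C (A x) := fun x => by
    rw [← Module.End.mul_apply, hcomm a c, Module.End.mul_apply]
  have hBC : ∀ x : V, B (C x) = C (B x) := fun x => by
    rw [← Module.End.mul_apply, hcomm b c, Module.End.mul_apply]
  constructor
  · apply Prod.ext
    · simp [qmul, add_assoc]
    · show (1 + ((a:Module.End R V) + ((b:Module.End R V)+(c:Module.End R V))))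
        (Ring.inverse e D) + _ = _
      rw [show (1 + (A + (B + C))) = e by rw [he_def, add_assoc], hED]
      simp only [qmul, hD, map_add, map_sub, LinearMap.add_apply, LinearMap.sub_apply,
        Module.End.one_apply, Module.End.mul_apply, ZeroMemClass.coe_zero, zero_sub, map_neg,
        sub_zero, AddSubgroup.coe_add, hAC, hBC]
      simp only [A, B, C] at hAC ⊢; rw [hAC]
      abel
  · intro s hs
    rw [Prod.ext_iff] at hs
    obtain ⟨hs1, hs2⟩ := hs
    simp only [qmul] at hs1 hs2
    have hs1' : s.1 = 0 := by
      have h : s.1 + (a + (b + c)) = 0 + (a + (b + c)) := by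
        rw [hs1, zero_add, add_assoc]
      exact add_right_cancel h
    apply Prod.ext
    · exact hs1'
    · have hs2' : e s.2 + ((1 + (B + C)) u + (1 - A) ((1 + C) v + (1 - B) w)) =
          (1 + C) ((1 + B) u + (1 - A) v) + (1 - (A + B)) w := by
        have := hs2
        rw [hs1'] at this
        simpa [he_def, add_assoc] using this
      have : e s.2 = D := by
        have h2 := eq_sub_of_add_eq hs2'
        rw [hD, h2]
        simp only [map_add, map_sub, LinearMap.add_apply, LinearMap.sub_apply,
          Module.End.one_apply, Module.End.mul_apply, AddSubgroup.coe_add, hAC, hBC]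
        abel
      calc s.2 = Ring.inverse e (e s.2) := (hDE s.2).symm
        _ = Ring.inverse e D := by rw [this]
end

section
/- The loop Q_{R,V}(W) is associative (i.e., is a group) if and only if ab = 0 for all a, b ∈ W. -/
/-- the loop `Q_{R,V}(W)` is associative (i.e. a group) if and only if
`ab = 0` for all `a, b ∈ W`. -/
theorem stmt8 {R : Type*} [CommRing R] {V : Type*} [AddCommGroup V] [Module R V]
    (W : AddSubgroup (Module.End R V))
    (hcomm : ∀ a b : W, (a : Module.End R V) * b = (b : Module.End R V) * a)
    (hinv : ∀ a : W, IsUnit (1 + (a : Module.End R V))) :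
    (∀ x y z : ↥W × V, qmul W (qmul W x y) z = qmul W x (qmul W y z)) ↔
      ∀ a b : ↥W, (a : Module.End R V) * (b : Module.End R V) = 0 := by
  constructor
  · intro h a b
    ext w
    have := h (a, 0) (b, 0) (0, w)
    simp only [qmul, Prod.mk.injEq] at this
    obtain ⟨-, h2⟩ := this
    simp only [map_zero, zero_add, add_zero, ZeroMemClass.coe_zero] at h2
    have h2' : (1 - ((a : Module.End R V) + b)) w = (1 - (a : Module.End R V))
        ((1 - (b : Module.End R V)) w) := by
      simpa using h2
    have h3 : ((1 : Module.End R V) - (a + b)) w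
        = ((1 - (a : Module.End R V)) * (1 - (b : Module.End R V))) w := h2'
    have h4 : (a : Module.End R V) * b
        = (1 - (a : Module.End R V)) * (1 - (b : Module.End R V))
          - (1 - ((a : Module.End R V) + b)) := by noncomm_ring
    have h5 : ((a : Module.End R V) * b) w = 0 := by
      rw [h4, LinearMap.sub_apply, ← h3, sub_self]
    simpa using h5
  · intro h x y z
    obtain ⟨a, u⟩ := x
    obtain ⟨b, v⟩ := y
    obtain ⟨c, w⟩ := z
    simp only [qmul, Prod.mk.injEq]
    refine ⟨add_assoc _ _ _, ?_⟩
    have key : ∀ p q : W, ((1 : Module.End R V) + p) * (1 + q) = 1 + ((p : Module.End R V) + q) := by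
      intro p q
      have := h q p
      rw [hcomm q p] at this
      simp only [mul_add, add_mul, one_mul, mul_one, this]
      abel
    have key2 : ∀ p q : W, ((1 : Module.End R V) - p) * (1 - q) = 1 - ((p : Module.End R V) + q) := by
      intro p q
      have := h p q
      simp only [mul_sub, sub_mul, one_mul, mul_one, this]
      abel
    calc (1 + (c : Module.End R V)) ((1 + (b : Module.End R V)) u + (1 - (a : Module.End R V)) v)
          + (1 - (((a : W) + b : W) : Module.End R V)) w
        = ((1 + (c : Module.End R V)) * (1 + b)) u + ((1 + (c : Module.End R V)) * (1 - a)) v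
          + (1 - ((a : Module.End R V) + b)) w := by
          simp [map_add]
      _ = (1 + ((c : Module.End R V) + b)) u + ((1 - (a : Module.End R V)) * (1 + c)) v
          + ((1 - (a : Module.End R V)) * (1 - b)) w := by
          rw [key c b, key2 a b]
          have hac : (1 + (c : Module.End R V)) * (1 - a)
              = (1 - (a : Module.End R V)) * (1 + c) := by
            simp only [mul_sub, sub_mul, mul_add, add_mul, one_mul, mul_one, hcomm a c]
            abel
          rw [hac]
      _ = (1 + (((b : W) + c : W) : Module.End R V)) u
          + (1 - (a : Module.End R V))
            ((1 + (c : Module.End R V)) v + (1 - (b : Module.End R V)) w) := by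
          simp [map_add]; abel
end

section
/- If V·W² = V, i.e., V is spanned by images of elements of V under products ab with a,b ∈ W, then the associator subloop of Q_{R,V}(W) (the smallest normal subloop N such that Q/N is a group) equals 0 × V. -/
/-- `N` is a normal subloop of `Q_{R,V}(W)`: a subloop (contains the identity, closed under
multiplication and both divisions) satisfying the Bruck normality conditions
`xN = Nx`, `x(yN) = (xy)N` and `(Nx)y = N(xy)`. -/
def IsNormalSubloop {R : Type*} [CommRing R] {V : Type*} [AddCommGroup V] [Module R V]
    (W : AddSubgroup (Module.End R V)) (N : Set (↥W × V)) : Prop :=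
  ((0, 0) ∈ N) ∧
  (∀ x ∈ N, ∀ y ∈ N, qmul W x y ∈ N) ∧
  (∀ x ∈ N, ∀ y ∈ N, ∃ z ∈ N, qmul W x z = y) ∧
  (∀ x ∈ N, ∀ y ∈ N, ∃ z ∈ N, qmul W z x = y) ∧
  (∀ x : ↥W × V, (qmul W x) '' N = (fun n => qmul W n x) '' N) ∧
  (∀ x y : ↥W × V,
    (fun n => qmul W x (qmul W y n)) '' N = (fun n => qmul W (qmul W x y) n) '' N) ∧
  (∀ x y : ↥W × V,
    (fun n => qmul W (qmul W n x) y) '' N = (fun n => qmul W n (qmul W x y)) '' N)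

/-- The quotient of `Q_{R,V}(W)` by the normal subloop `N` is a group, i.e. all associators
lie in `N`. -/
def GroupQuotient {R : Type*} [CommRing R] {V : Type*} [AddCommGroup V] [Module R V]
    (W : AddSubgroup (Module.End R V)) (N : Set (↥W × V)) : Prop :=
  ∀ x y z : ↥W × V, ∃ n ∈ N, qmul W (qmul W x y) z = qmul W n (qmul W x (qmul W y z))

section stmt9helpers

variable {R : Type*} [CommRing R] {V : Type*} [AddCommGroup V] [Module R V]

lemma stmt9_unit_surj (e : Module.End R V) (h : IsUnit e) (s : V) : ∃ t, e t = s :=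
  ((Module.End.isUnit_iff e).mp h).2 s

lemma stmt9_unit_inj (e : Module.End R V) (h : IsUnit e) {s t : V} (hst : e s = e t) : s = t :=
  ((Module.End.isUnit_iff e).mp h).1 hst

lemma stmt9_image_char {W : AddSubgroup (Module.End R V)} (f : ↥W × V → ↥W × V) (c : ↥W)
    (h1 : ∀ n : ↥W × V, n.1 = 0 → (f n).1 = c)
    (h2 : ∀ q : ↥W × V, q.1 = c → ∃ t : V, f (0, t) = q) :
    f '' {p : ↥W × V | p.1 = 0} = {p : ↥W × V | p.1 = c} := by
  ext q
  constructor
  · rintro ⟨n, hn, rfl⟩; exact h1 n hn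
  · intro hq; obtain ⟨t, ht⟩ := h2 q hq; exact ⟨(0, t), rfl, ht⟩

lemma stmt9_n0_normal (W : AddSubgroup (Module.End R V))
    (hinv : ∀ a : W, IsUnit (1 + (a : Module.End R V))) :
    IsNormalSubloop W {p : ↥W × V | p.1 = 0} := by
  have hm : ∀ a : W, IsUnit (1 - (a : Module.End R V)) := by
    intro a; rw [sub_eq_add_neg]; simpa using hinv (-a)
  refine ⟨rfl, ?_, ?_, ?_, ?_, ?_, ?_⟩
  · intro x hx y hy
    simp only [Set.mem_setOf_eq] at *
    simp [qmul, hx, hy]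
  · intro x hx y hy
    simp only [Set.mem_setOf_eq] at hx hy
    refine ⟨(0, y.2 - x.2), rfl, ?_⟩
    simp [qmul, hx, hy, Prod.ext_iff]
  · intro x hx y hy
    simp only [Set.mem_setOf_eq] at hx hy
    refine ⟨(0, y.2 - x.2), rfl, ?_⟩
    simp [qmul, hx, hy, Prod.ext_iff]
  · intro x
    have hA : (qmul W x) '' {p : ↥W × V | p.1 = 0} = {p : ↥W × V | p.1 = x.1} := by
      refine stmt9_image_char _ x.1 (fun n hn => by simp [qmul, hn]) (fun q hq => ?_)
      obtain ⟨t, ht⟩ := stmt9_unit_surj _ (hm x.1) (q.2 - x.2)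
      refine ⟨t, Prod.ext (by simp [qmul, hq]) ?_⟩
      simp only [qmul, ZeroMemClass.coe_zero, add_zero, zero_add, Module.End.one_apply]
      rw [ht]; abel
    have hB : (fun n => qmul W n x) '' {p : ↥W × V | p.1 = 0} = {p : ↥W × V | p.1 = x.1} := by
      refine stmt9_image_char _ x.1 (fun n hn => by simp [qmul, hn]) (fun q hq => ?_)
      obtain ⟨t, ht⟩ := stmt9_unit_surj _ (hinv x.1) (q.2 - x.2)
      refine ⟨t, Prod.ext (by simp [qmul, hq]) ?_⟩
      simp only [qmul, ZeroMemClass.coe_zero, sub_zero, zero_add, Module.End.one_apply]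
      rw [ht]; abel
    rw [hA, hB]
  · intro x y
    have hA : (fun n => qmul W x (qmul W y n)) '' {p : ↥W × V | p.1 = 0}
        = {p : ↥W × V | p.1 = x.1 + y.1} := by
      refine stmt9_image_char _ _ (fun n hn => by simp [qmul, hn, add_assoc]) (fun q hq => ?_)
      obtain ⟨t, ht⟩ := stmt9_unit_surj _ ((hm x.1).mul (hm y.1))
        (q.2 - ((1 + ((y.1 : Module.End R V))) x.2 + (1 - (x.1 : Module.End R V)) y.2))
      rw [Module.End.mul_apply] at ht
      refine ⟨t, Prod.ext (by simp [qmul, hq, add_assoc]) ?_⟩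
      simp only [qmul, ZeroMemClass.coe_zero, add_zero, zero_add, Module.End.one_apply, map_add]
      rw [ht]; abel
    have hB : (fun n => qmul W (qmul W x y) n) '' {p : ↥W × V | p.1 = 0}
        = {p : ↥W × V | p.1 = x.1 + y.1} := by
      refine stmt9_image_char _ _ (fun n hn => by simp [qmul, hn]) (fun q hq => ?_)
      obtain ⟨t, ht⟩ := stmt9_unit_surj _ (hm (x.1 + y.1))
        (q.2 - ((1 + ((y.1 : Module.End R V))) x.2 + (1 - (x.1 : Module.End R V)) y.2))
      refine ⟨t, Prod.ext (by simp [qmul, hq]) ?_⟩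
      simp only [qmul, ZeroMemClass.coe_zero, add_zero, zero_add, Module.End.one_apply]
      rw [ht]; abel
    rw [hA, hB]
  · intro x y
    have hA : (fun n => qmul W (qmul W n x) y) '' {p : ↥W × V | p.1 = 0}
        = {p : ↥W × V | p.1 = x.1 + y.1} := by
      refine stmt9_image_char _ _ (fun n hn => by simp [qmul, hn]) (fun q hq => ?_)
      obtain ⟨t, ht⟩ := stmt9_unit_surj _ ((hinv y.1).mul (hinv x.1))
        (q.2 - ((1 + ((y.1 : Module.End R V))) x.2 + (1 - (x.1 : Module.End R V)) y.2))
      rw [Module.End.mul_apply] at ht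
      refine ⟨t, Prod.ext (by simp [qmul, hq]) ?_⟩
      simp only [qmul, ZeroMemClass.coe_zero, sub_zero, zero_add, Module.End.one_apply, map_add]
      rw [ht]; abel
    have hB : (fun n => qmul W n (qmul W x y)) '' {p : ↥W × V | p.1 = 0}
        = {p : ↥W × V | p.1 = x.1 + y.1} := by
      refine stmt9_image_char _ _ (fun n hn => by simp [qmul, hn, add_assoc]) (fun q hq => ?_)
      obtain ⟨t, ht⟩ := stmt9_unit_surj _ (hinv (x.1 + y.1))
        (q.2 - ((1 + ((y.1 : Module.End R V))) x.2 + (1 - (x.1 : Module.End R V)) y.2))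
      refine ⟨t, Prod.ext (by simp [qmul, hq, add_assoc]) ?_⟩
      simp only [qmul, ZeroMemClass.coe_zero, sub_zero, zero_add, Module.End.one_apply]
      rw [ht]; abel
    rw [hA, hB]

lemma stmt9_n0_group (W : AddSubgroup (Module.End R V))
    (hinv : ∀ a : W, IsUnit (1 + (a : Module.End R V))) :
    GroupQuotient W {p : ↥W × V | p.1 = 0} := by
  intro x y z
  obtain ⟨t, ht⟩ := stmt9_unit_surj _ (hinv (x.1 + (y.1 + z.1)))
    ((qmul W (qmul W x y) z).2 - (qmul W x (qmul W y z)).2)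
  refine ⟨(0, t), rfl, ?_⟩
  have h1 : (qmul W (qmul W x y) z).1 = (qmul W (0, t) (qmul W x (qmul W y z))).1 := by
    simp [qmul, add_assoc]
  have h2 : (qmul W (qmul W x y) z).2 = (qmul W (0, t) (qmul W x (qmul W y z))).2 := by
    show _ = (1 + ((qmul W x (qmul W y z)).1 : Module.End R V)) t
      + (1 - ((0:↥W) : Module.End R V)) (qmul W x (qmul W y z)).2
    have h3 : (qmul W x (qmul W y z)).1 = x.1 + (y.1 + z.1) := by simp [qmul]
    rw [h3, ht]
    simp
  exact Prod.ext h1 h2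

lemma stmt9_factC (W : AddSubgroup (Module.End R V))
    (hcomm : ∀ a b : W, (a : Module.End R V) * b = (b : Module.End R V) * a)
    (hinv : ∀ a : W, IsUnit (1 + (a : Module.End R V)))
    (N : Set (↥W × V)) (hgrp : GroupQuotient W N) :
    ∀ (b c : ↥W) (u : V), ((0 : ↥W), ((b : Module.End R V) * c) u) ∈ N := by
  intro b c u
  have heu : IsUnit (1 + ((b + c : ↥W) : Module.End R V)) := hinv (b + c)
  obtain ⟨n, hnN, heq⟩ :=
    hgrp (0, (1 + ((b + c : ↥W) : Module.End R V)) u) (b, (0:V)) (c, (0:V))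
  have h1 := congrArg Prod.fst heq
  have h2 := congrArg Prod.snd heq
  simp only [qmul] at h1 h2
  simp only [ZeroMemClass.coe_zero, map_zero, add_zero, zero_add, sub_zero,
    Module.End.one_apply] at h1 h2
  have hn1 : n.1 = 0 := right_eq_add.mp h1
  rw [hn1] at h2
  simp only [ZeroMemClass.coe_zero, sub_zero, Module.End.one_apply] at h2
  have hbc : Commute ((b : Module.End R V)) ((c : Module.End R V)) := hcomm b c
  have hX : Commute ((1 + (c : Module.End R V)) * (1 + (b : Module.End R V)))
      (1 + ((b + c : ↥W) : Module.End R V)) := by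
    rw [AddSubgroup.coe_add]
    exact Commute.mul_left
      ((Commute.one_left _).add_left
        ((Commute.one_right _).add_right (hbc.symm.add_right (Commute.refl _))))
      ((Commute.one_left _).add_left
        ((Commute.one_right _).add_right ((Commute.refl _).add_right hbc)))
  have hXe : (1 + (c : Module.End R V)) * (1 + (b : Module.End R V))
      - (1 + ((b + c : ↥W) : Module.End R V)) = (b : Module.End R V) * c := by
    rw [AddSubgroup.coe_add, mul_add, mul_one, add_mul, one_mul, hbc.eq]
    abel
  have key : (1 + ((b + c : ↥W) : Module.End R V)) n.2
      = (1 + ((b + c : ↥W) : Module.End R V)) (((b : Module.End R V) * c) u) := by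
    have h2' : (1 + ((b + c : ↥W) : Module.End R V)) n.2
        = (1 + (c : Module.End R V)) ((1 + (b : Module.End R V))
            ((1 + ((b + c : ↥W) : Module.End R V)) u))
          - (1 + ((b + c : ↥W) : Module.End R V))
              ((1 + ((b + c : ↥W) : Module.End R V)) u) := by
      rw [h2]; abel
    rw [h2', ← Module.End.mul_apply, ← Module.End.mul_apply, ← Module.End.mul_apply,
      hX.eq, ← LinearMap.sub_apply, ← mul_sub, hXe, Module.End.mul_apply]
  have hn2 : n.2 = ((b : Module.End R V) * c) u := stmt9_unit_inj _ heu key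
  have hn : n = ((0 : ↥W), ((b : Module.End R V) * c) u) := Prod.ext hn1 hn2
  exact hn ▸ hnN

end stmt9helpers

/-- if `V·W² = V` (i.e. `V` is spanned by the images of elements of `V` under
products `ab` with `a, b ∈ W`), then the associator subloop of `Q_{R,V}(W)`, the smallest
normal subloop with group quotient, equals `0 × V`. -/
theorem stmt9 {R : Type*} [CommRing R] {V : Type*} [AddCommGroup V] [Module R V]
    (W : AddSubgroup (Module.End R V))
    (hcomm : ∀ a b : W, (a : Module.End R V) * b = (b : Module.End R V) * a)
    (hinv : ∀ a : W, IsUnit (1 + (a : Module.End R V)))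
    (hVW2 : Submodule.span R
        {x : V | ∃ a b : ↥W, ∃ u : V, x = ((a : Module.End R V) * b) u} = ⊤) :
    ⋂₀ {N : Set (↥W × V) | IsNormalSubloop W N ∧ GroupQuotient W N} =
      {p : ↥W × V | p.1 = 0} := by
  apply subset_antisymm
  · exact Set.sInter_subset_of_mem ⟨stmt9_n0_normal W hinv, stmt9_n0_group W hinv⟩
  · rintro p hp N ⟨⟨hid, hmulN, -, -, -, -, -⟩, hgrp⟩
    have factB : ∀ s t : V, ((0 : ↥W), s) ∈ N → ((0 : ↥W), t) ∈ N →
        ((0 : ↥W), s + t) ∈ N := by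
      intro s t hs ht
      have h := hmulN _ hs _ ht
      simpa [qmul] using h
    let P : Submodule R V :=
      { carrier := {v : V | ∀ r : R, ((0 : ↥W), r • v) ∈ N}
        add_mem' := fun {x y} hx hy r => by
          rw [smul_add]; exact factB _ _ (hx r) (hy r)
        zero_mem' := fun r => by simpa using hid
        smul_mem' := fun r x hx r' => by rw [smul_smul]; exact hx (r' * r) }
    have hsub : Submodule.span R
        {x : V | ∃ a b : ↥W, ∃ u : V, x = ((a : Module.End R V) * b) u} ≤ P := by
      rw [Submodule.span_le]
      rintro x ⟨a, b, u, rfl⟩ r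
      rw [← map_smul]
      exact stmt9_factC W hcomm hinv N hgrp a b (r • u)
    have hp2 : p.2 ∈ P := hsub (hVW2.symm ▸ Submodule.mem_top)
    have h1 := hp2 1
    rw [one_smul] at h1
    have hpp : p = ((0 : ↥W), p.2) := Prod.ext hp rfl
    exact hpp ▸ h1
end

section
/- Let k < K be a field extension and W a k-subspace of K with W ∩ k·1 = 0. Then, identifying each a ∈ W with the multiplication endomorphism M_a : K → K, b ↦ ba, the set {M_a : a ∈ W} is an additive subgroup of End_k(K) consisting of pairwise commuting endomorphisms such that 1 + M_a is invertible for every a ∈ W; hence the construction Q_{k,K}(W) on W × K with multiplication (a,u)(b,v) = (a+b, u(1+b) + v(1-a)) (products taken in K) yields an automorphic loop. -/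
/-- Multiplication of the loop `Q_{k<K}(W)` on `W × K`:
`(a,u)(b,v) = (a+b, u(1+b) + v(1-a))`, with all products taken in the field `K`. -/
def kqmul {k : Type*} [Field k] {K : Type*} [Field K] [Algebra k K]
    (W : Submodule k K) (p q : ↥W × K) : ↥W × K :=
  (p.1 + q.1, p.2 * (1 + (q.1 : K)) + q.2 * (1 - (p.1 : K)))

/-- for a field extension `k < K` and a `k`-subspace `W` of `K` with
`k·1 ∩ W = 0`, the multiplication endomorphisms `M_a` (`a ∈ W`) form an additive subgroup
of `End_k(K)` of pairwise commuting endomorphisms with `1 + M_a` invertible; hence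
`Q_{k<K}(W)` is a loop (all translations are bijective) and is automorphic (every element
of the stabilizer of the identity in the group generated by all translations is an
automorphism). -/
theorem stmt10 {k : Type*} [Field k] {K : Type*} [Field K] [Algebra k K]
    (W : Submodule k K)
    (hW : ∀ x ∈ W, x ∈ Set.range (algebraMap k K) → x = 0) :
    (∃ W' : AddSubgroup (Module.End k K),
      (W' : Set (Module.End k K)) = Set.range (fun a : ↥W => LinearMap.mulLeft k (a : K))) ∧
    (∀ a b : ↥W,
      (LinearMap.mulLeft k (a : K) * LinearMap.mulLeft k (b : K) : Module.End k K) =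
        LinearMap.mulLeft k (b : K) * LinearMap.mulLeft k (a : K)) ∧
    (∀ a : ↥W, IsUnit ((1 + LinearMap.mulLeft k (a : K) : Module.End k K))) ∧
    (∀ p : ↥W × K, Function.Bijective (kqmul W p)) ∧
    (∀ p : ↥W × K, Function.Bijective (fun q => kqmul W q p)) ∧
    (∀ σ ∈ Subgroup.closure {σ : Equiv.Perm (↥W × K) |
        (∃ p, ∀ q, σ q = kqmul W p q) ∨ (∃ p, ∀ q, σ q = kqmul W q p)},
      σ ((0 : ↥W), (0 : K)) = (0, 0) →
        ∀ p q : ↥W × K, σ (kqmul W p q) = kqmul W (σ p) (σ q)) := by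
  -- basic nonvanishing facts
  have h1 : ∀ a : ↥W, (1 : K) + (a : K) ≠ 0 := by
    intro a h
    have ha : (a : K) = 0 := hW a a.2 ⟨-1, by rw [map_neg, map_one]; linear_combination -h⟩
    rw [ha, add_zero] at h
    exact one_ne_zero h
  have h2 : ∀ a : ↥W, (1 : K) - (a : K) ≠ 0 := by
    intro a h
    have ha : (a : K) = 0 := hW a a.2 ⟨1, by rw [map_one]; linear_combination h⟩
    rw [ha, sub_zero] at h
    exact one_ne_zero h
  -- bijectivity of affine maps
  have key : ∀ (c : ↥W) (α β γ : K), α ≠ 0 →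
      Function.Bijective (fun q : ↥W × K =>
        ((q.1 + c, α * q.2 + β * (q.1 : K) + γ) : ↥W × K)) := by
    intro c α β γ hα
    rw [Function.bijective_iff_has_inverse]
    refine ⟨fun q => (q.1 - c, α⁻¹ * (q.2 - β * ((q.1 : K) - (c : K)) - γ)), ?_, ?_⟩
    · intro q
      refine Prod.ext ?_ ?_
      · simp
      · push_cast
        field_simp
        ring
    · intro q
      refine Prod.ext ?_ ?_
      · simp
      · push_cast
        field_simp
        ring
  refine ⟨?_, ?_, ?_, ?_, ?_, ?_⟩
  · -- additive subgroup
    refine ⟨{ carrier := Set.range (fun a : ↥W => LinearMap.mulLeft k (a : K))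
              zero_mem' := ⟨0, by ext x; simp⟩
              add_mem' := ?_
              neg_mem' := ?_ }, rfl⟩
    · rintro _ _ ⟨a, rfl⟩ ⟨b, rfl⟩
      refine ⟨a + b, by ext x; simp only [LinearMap.mulLeft_apply, LinearMap.add_apply]; push_cast; ring⟩
    · rintro _ ⟨a, rfl⟩
      refine ⟨-a, by ext x; simp only [LinearMap.mulLeft_apply, LinearMap.neg_apply]; push_cast; ring⟩
  · -- commutation
    intro a b
    ext x
    simp only [Module.End.mul_apply, LinearMap.mulLeft_apply]
    ring
  · -- invertibility of 1 + M_a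
    intro a
    rw [isUnit_iff_exists]
    refine ⟨LinearMap.mulLeft k ((1 + (a : K))⁻¹), ?_, ?_⟩ <;>
    · ext x
      simp only [Module.End.mul_apply, LinearMap.mulLeft_apply, LinearMap.add_apply,
        Module.End.one_apply]
      field_simp [h1 a]
  · -- left translations bijective
    intro p
    have : kqmul W p = fun q : ↥W × K =>
        ((q.1 + p.1, (1 - (p.1 : K)) * q.2 + (p.2 : K) * (q.1 : K) + p.2) : ↥W × K) := by
      funext q
      refine Prod.ext ?_ ?_
      · exact add_comm _ _
      · show p.2 * (1 + (q.1 : K)) + q.2 * (1 - (p.1 : K)) = _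
        ring
    rw [this]
    exact key p.1 _ _ _ (h2 p.1)
  · -- right translations bijective
    intro p
    have : (fun q => kqmul W q p) = fun q : ↥W × K =>
        ((q.1 + p.1, (1 + (p.1 : K)) * q.2 + (-(p.2 : K)) * (q.1 : K) + p.2) : ↥W × K) := by
      funext q
      refine Prod.ext ?_ ?_
      · rfl
      · show q.2 * (1 + (p.1 : K)) + p.2 * (1 - (q.1 : K)) = _
        ring
    rw [this]
    exact key p.1 _ _ _ (h1 p.1)
  · -- automorphic property
    set P : Equiv.Perm (↥W × K) → Prop := fun σ =>
      ∃ (c : ↥W) (α β γ : K), α ≠ 0 ∧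
        ∀ q : ↥W × K, σ q = (q.1 + c, α * q.2 + β * (q.1 : K) + γ) with hP
    let H : Subgroup (Equiv.Perm (↥W × K)) :=
      { carrier := {σ | P σ}
        one_mem' := ⟨0, 1, 0, 0, one_ne_zero, fun q => by simp⟩
        mul_mem' := by
          rintro σ τ ⟨c, α, β, γ, hα, hσ⟩ ⟨c', α', β', γ', hα', hτ⟩
          refine ⟨c' + c, α * α', α * β' + β, α * γ' + β * (c' : K) + γ,
            mul_ne_zero hα hα', fun q => ?_⟩
          show σ (τ q) = _
          rw [hτ q, hσ _]
          refine Prod.ext ?_ ?_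
          · exact add_assoc q.1 c' c
          · push_cast
            ring
        inv_mem' := by
          rintro σ ⟨c, α, β, γ, hα, hσ⟩
          refine ⟨-c, α⁻¹, -(α⁻¹ * β), α⁻¹ * β * (c : K) - α⁻¹ * γ, inv_ne_zero hα,
            fun q => ?_⟩
          apply σ.injective
          rw [Equiv.Perm.inv_def, Equiv.apply_symm_apply, hσ _]
          refine Prod.ext ?_ ?_
          · simp
          · push_cast
            field_simp
            ring }
    have hle : Subgroup.closure {σ : Equiv.Perm (↥W × K) |
        (∃ p, ∀ q, σ q = kqmul W p q) ∨ (∃ p, ∀ q, σ q = kqmul W q p)} ≤ H := by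
      rw [Subgroup.closure_le]
      rintro σ (⟨p, hp⟩ | ⟨p, hp⟩)
      · refine ⟨p.1, 1 - (p.1 : K), (p.2 : K), (p.2 : K), h2 p.1, fun q => ?_⟩
        rw [hp q]
        refine Prod.ext (add_comm _ _) ?_
        show p.2 * (1 + (q.1 : K)) + q.2 * (1 - (p.1 : K)) = _
        ring
      · refine ⟨p.1, 1 + (p.1 : K), -(p.2 : K), (p.2 : K), h1 p.1, fun q => ?_⟩
        rw [hp q]
        refine Prod.ext rfl ?_
        show q.2 * (1 + (p.1 : K)) + p.2 * (1 - (q.1 : K)) = _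
        ring
    intro σ hσ hfix p q
    obtain ⟨c, α, β, γ, hα, hform⟩ := hle hσ
    have h0 := hform (0, 0)
    rw [hfix] at h0
    have hc : c = 0 := by
      have := congrArg Prod.fst h0
      simpa using this.symm
    have hγ : γ = 0 := by
      have := congrArg Prod.snd h0
      simpa using this.symm
    subst hc hγ
    rw [hform, hform, hform]
    refine Prod.ext ?_ ?_
    · show (kqmul W p q).1 + 0 = ((p.1 + 0) + (q.1 + 0) : ↥W)
      simp [kqmul]
    · show α * (p.2 * (1 + (q.1 : K)) + q.2 * (1 - (p.1 : K))) + β * ((kqmul W p q).1 : K) + 0 =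
        (α * p.2 + β * (p.1 : K) + 0) * (1 + ((q.1 + 0 : ↥W) : K)) +
          (α * q.2 + β * (q.1 : K) + 0) * (1 - ((p.1 + 0 : ↥W) : K))
      push_cast [kqmul]
      ring
end

section
/- Let k < K be a field extension, W₀, W₁ k-subspaces of K with k·1 ∩ Wᵢ = 0, Qᵢ = Q_{k<K}(Wᵢ), A an additive bijection of K with A^{-1}{M_a : a∈W₀}A = {M_b : b∈W₁}, Ā the induced bijection W₀ → W₁, and c ∈ K. Then the map f : Q₀ → Q₁ defined by (a,u)f = (aĀ, c·(aĀ) + uA) is a loop isomorphism from Q₀ to Q₁. -/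
/-- given a field extension `k < K`, `k`-subspaces `W₀, W₁` with
`k·1 ∩ Wᵢ = 0`, an additive bijection `A` of `K` with `A⁻¹ M_{W₀} A = M_{W₁}`, the induced
bijection `Ā : W₀ → W₁` (so `A(A⁻¹(x)·a) = x·(aĀ)`), and `c ∈ K`, the map
`f(a,u) = (aĀ, c·(aĀ) + uA)` is a loop isomorphism `Q_{k<K}(W₀) → Q_{k<K}(W₁)`. -/
theorem stmt13 {k : Type*} [Field k] {K : Type*} [Field K] [Algebra k K]
    (W₀ W₁ : Submodule k K)
    (hW₀ : ∀ x ∈ W₀, x ∈ Set.range (algebraMap k K) → x = 0)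
    (hW₁ : ∀ x ∈ W₁, x ∈ Set.range (algebraMap k K) → x = 0)
    (A : K ≃+ K) (Abar : ↥W₀ → ↥W₁)
    (hbar : ∀ (a : ↥W₀) (x : K), A (A.symm x * (a : K)) = x * (Abar a : K))
    (hbij : Function.Bijective Abar) (c : K) :
    Function.Bijective
      (fun p : ↥W₀ × K => ((Abar p.1, c * (Abar p.1 : K) + A p.2) : ↥W₁ × K)) ∧
    (∀ p q : ↥W₀ × K,
      (fun p : ↥W₀ × K => ((Abar p.1, c * (Abar p.1 : K) + A p.2) : ↥W₁ × K)) (kqmul W₀ p q) =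
      kqmul W₁
        ((fun p : ↥W₀ × K => ((Abar p.1, c * (Abar p.1 : K) + A p.2) : ↥W₁ × K)) p)
        ((fun p : ↥W₀ × K => ((Abar p.1, c * (Abar p.1 : K) + A p.2) : ↥W₁ × K)) q)) := by
  constructor
  · constructor
    · rintro ⟨a, u⟩ ⟨b, v⟩ h
      simp only [Prod.mk.injEq] at h
      have ha : a = b := hbij.1 h.1
      subst ha
      have hu : A u = A v := by
        have := h.2
        rwa [add_right_inj] at this
      exact Prod.ext rfl (A.injective hu)
    · rintro ⟨b, w⟩
      obtain ⟨a, ha⟩ := hbij.2 b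
      exact ⟨(a, A.symm (w - c * (b : K))), by simp [ha]⟩
  · have hmul : ∀ (u : K) (a : ↥W₀), A (u * (a : K)) = A u * (Abar a : K) := by
      intro u a
      simpa using hbar a (A u)
    have habar : ∀ a b : ↥W₀, (Abar (a + b) : K) = (Abar a : K) + (Abar b : K) := by
      intro a b
      have h1 := hbar (a + b) 1
      have h2 := hbar a 1
      have h3 := hbar b 1
      have : A (A.symm 1 * ((a : K) + (b : K))) = A (A.symm 1 * (a : K)) + A (A.symm 1 * (b : K)) := by
        rw [mul_add, map_add]
      rw [Submodule.coe_add] at h1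
      rw [h1, h2, h3, one_mul, one_mul, one_mul] at this
      exact this
    rintro ⟨a, u⟩ ⟨b, v⟩
    refine Prod.ext (Subtype.ext ?_) ?_
    · simp [kqmul, habar]
    · simp only [kqmul, map_add, habar]
      have e1 : A (u * (1 + (b : K))) = A u + A u * (Abar b : K) := by
        rw [mul_add, map_add, mul_one, hmul]
      have e2 : A (v * (1 - (a : K))) = A v - A v * (Abar a : K) := by
        rw [mul_sub, map_sub, mul_one, hmul]
      rw [e1, e2]
      ring
end

section
/- Let k be a prime field, K a field extension of k, W a k-subspace with k·1 ∩ W = 0 generating K as a field over k, and S(W) = {A ∈ GL_k(K) : A^{-1}{M_a : a∈W}A = {M_a : a∈W}}. Then the map S(W) → Aut(K), A ↦ Ā (where Ā is the unique field automorphism of K with A^{-1}M_aA = M_{aĀ} for all a ∈ K) is a group homomorphism whose kernel is {M_c : c ∈ K*} ≅ K* and whose image is I(W) = {φ ∈ Aut(K) : Wφ = W}; moreover S(W) = I(W)·{M_c : c ∈ K*} is isomorphic to the semidirect product I(W) ⋉ K* with multiplication (A,c)(B,d) = (AB, (cB̄)·d). -/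
/-- The multiplication operator `M_a : K → K`, `x ↦ x·a`, as a `k`-linear endomorphism. -/
def ML (k : Type*) [Field k] {K : Type*} [Field K] [Algebra k K] (a : K) :
    Module.End k K :=
  LinearMap.mulLeft k a

/-- `A ∈ S(W)`: the invertible `k`-linear map `A` of `K` satisfies
`A⁻¹ {M_a : a ∈ W} A = {M_a : a ∈ W}`. -/
def memS {k : Type*} [Field k] {K : Type*} [Field K] [Algebra k K]
    (W : Submodule k K) (A : (Module.End k K)ˣ) : Prop :=
  (∀ a ∈ W, ∃ b ∈ W, (↑A⁻¹ * ML k a * ↑A : Module.End k K) = ML k b) ∧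
  (∀ b ∈ W, ∃ a ∈ W, (↑A⁻¹ * ML k a * ↑A : Module.End k K) = ML k b)

namespace Stmt14Aux

variable {k : Type*} [Field k] {K : Type*} [Field K] [Algebra k K]

lemma ML_apply (a x : K) : ML k a x = a * x := rfl

lemma ML_inj : Function.Injective (ML k : K → Module.End k K) := by
  intro a b h
  have := congrArg (fun T : Module.End k K => T 1) h
  simpa [ML_apply] using this

lemma ML_mul (a b : K) : ML k (a * b) = ML k a * ML k b :=
  by ext x; simp [ML, mul_assoc]

lemma ML_add (a b : K) : ML k (a + b) = ML k a + ML k b := by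
  ext x; simp [ML_apply, add_mul]

lemma ML_one : ML k (1 : K) = 1 := LinearMap.mulLeft_one k K

lemma ML_zero : ML k (0 : K) = 0 := by ext x; simp [ML_apply]

/-- Centralizer lemma: an endomorphism commuting with all `M_w`, `w ∈ W`, commutes with
all `M_a` when `W` generates `K` as a field extension. -/
lemma central (W : Submodule k K)
    (hgen : IntermediateField.adjoin k (W : Set K) = ⊤)
    (T : Module.End k K)
    (hT : ∀ w ∈ W, ML k w * T = T * ML k w) :
    ∀ a : K, ML k a * T = T * ML k a := by
  intro a
  let E : IntermediateField k K :=
  { carrier := {a : K | ML k a * T = T * ML k a}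
    mul_mem' := by
      intro x y hx hy
      show ML k (x * y) * T = T * ML k (x * y)
      rw [ML_mul, mul_assoc, hy, ← mul_assoc, hx, mul_assoc]
    one_mem' := by show ML k (1:K) * T = T * ML k 1; rw [ML_one, one_mul, mul_one]
    add_mem' := by
      intro x y hx hy
      show ML k (x + y) * T = T * ML k (x + y)
      rw [ML_add, add_mul, mul_add, hx, hy]
    zero_mem' := by show ML k (0:K) * T = T * ML k 0; rw [ML_zero, zero_mul, mul_zero]
    inv_mem' := by
      intro x hx
      show ML k x⁻¹ * T = T * ML k x⁻¹
      rcases eq_or_ne x 0 with rfl | hx0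
      · simp [ML_zero]
      · have h1 : ML k x * ML k x⁻¹ = 1 := by
          rw [← ML_mul, mul_inv_cancel₀ hx0, ML_one]
        have h2 : ML k x⁻¹ * ML k x = 1 := by
          rw [← ML_mul, inv_mul_cancel₀ hx0, ML_one]
        have hxT : ML k x * T = T * ML k x := hx
        calc ML k x⁻¹ * T = ML k x⁻¹ * T * (ML k x * ML k x⁻¹) := by rw [h1, mul_one]
          _ = ML k x⁻¹ * (T * ML k x) * ML k x⁻¹ := by noncomm_ring
          _ = ML k x⁻¹ * (ML k x * T) * ML k x⁻¹ := by rw [hxT]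
          _ = (ML k x⁻¹ * ML k x) * (T * ML k x⁻¹) := by noncomm_ring
          _ = T * ML k x⁻¹ := by rw [h2, one_mul]
    algebraMap_mem' := by
      intro r
      show ML k (algebraMap k K r) * T = T * ML k (algebraMap k K r)
      ext x
      simp only [Module.End.mul_apply, ML_apply, ← Algebra.smul_def]
      rw [map_smul] }
  have hWE : (W : Set K) ⊆ E := fun w hw => show ML k w * T = T * ML k w from hT w hw
  have hle : IntermediateField.adjoin k (W : Set K) ≤ E :=
    IntermediateField.adjoin_le_iff.2 hWE
  have : a ∈ E := hle (hgen ▸ IntermediateField.mem_top)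
  exact (show ML k a * T = T * ML k a from this)

lemma eq_ML_of_comm (W : Submodule k K)
    (hgen : IntermediateField.adjoin k (W : Set K) = ⊤)
    (T : Module.End k K)
    (hT : ∀ w ∈ W, ML k w * T = T * ML k w) :
    T = ML k (T 1) := by
  ext x
  have h := central W hgen T hT x
  have := congrArg (fun S : Module.End k K => S 1) h
  simp only [Module.End.mul_apply, ML_apply, mul_one] at this
  rw [ML_apply, mul_comm, this]


/-- The candidate automorphism value. -/
def f (A : (Module.End k K)ˣ) (a : K) : K :=
  (↑A⁻¹ * ML k a * ↑A : Module.End k K) 1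

lemma conj_conj (A : (Module.End k K)ˣ) (S S' : Module.End k K) :
    (↑A⁻¹ * S * ↑A : Module.End k K) * (↑A⁻¹ * S' * ↑A) = ↑A⁻¹ * (S * S') * ↑A := by
  have h : (↑A * ↑A⁻¹ : Module.End k K) = 1 := A.mul_inv
  calc (↑A⁻¹ * S * ↑A : Module.End k K) * (↑A⁻¹ * S' * ↑A)
      = ↑A⁻¹ * S * (↑A * ↑A⁻¹) * S' * ↑A := by noncomm_ring
    _ = ↑A⁻¹ * (S * S') * ↑A := by rw [h]; noncomm_ring

lemma conj_eq (W : Submodule k K)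
    (hgen : IntermediateField.adjoin k (W : Set K) = ⊤)
    (A : (Module.End k K)ˣ) (hA : memS W A) (a : K) :
    (↑A⁻¹ * ML k a * ↑A : Module.End k K) = ML k (f A a) := by
  apply eq_ML_of_comm W hgen
  intro w hw
  obtain ⟨w', hw', hww⟩ := hA.2 w hw
  rw [← hww, conj_conj, conj_conj, ← ML_mul, ← ML_mul, mul_comm a w']

lemma memS_inv (W : Submodule k K) (A : (Module.End k K)ˣ) (hA : memS W A) :
    memS W A⁻¹ := by
  constructor
  · intro a ha
    obtain ⟨b, hb, hba⟩ := hA.2 a ha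
    refine ⟨b, hb, ?_⟩
    rw [inv_inv]
    rw [← hba]
    calc (↑A * (↑A⁻¹ * ML k b * ↑A) * ↑A⁻¹ : Module.End k K)
        = (↑A * ↑A⁻¹) * ML k b * (↑A * ↑A⁻¹) := by noncomm_ring
      _ = ML k b := by rw [A.mul_inv]; noncomm_ring
  · intro b hb
    obtain ⟨a, ha, hab⟩ := hA.1 b hb
    refine ⟨a, ha, ?_⟩
    rw [inv_inv, ← hab]
    calc (↑A * (↑A⁻¹ * ML k b * ↑A) * ↑A⁻¹ : Module.End k K)
        = (↑A * ↑A⁻¹) * ML k b * (↑A * ↑A⁻¹) := by noncomm_ring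
      _ = ML k b := by rw [A.mul_inv]; noncomm_ring

lemma f_inv_f (W : Submodule k K)
    (hgen : IntermediateField.adjoin k (W : Set K) = ⊤)
    (A : (Module.End k K)ˣ) (hA : memS W A) (a : K) :
    f A⁻¹ (f A a) = a := by
  apply ML_inj (k := k)
  rw [← conj_eq W hgen A⁻¹ (memS_inv W A hA), ← conj_eq W hgen A hA, inv_inv]
  calc (↑A * (↑A⁻¹ * ML k a * ↑A) * ↑A⁻¹ : Module.End k K)
      = (↑A * ↑A⁻¹) * ML k a * (↑A * ↑A⁻¹) := by noncomm_ring
    _ = ML k a := by rw [A.mul_inv]; noncomm_ring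

/-- The ring automorphism attached to `A ∈ S(W)`. -/
lemma exists_bar (W : Submodule k K)
    (hgen : IntermediateField.adjoin k (W : Set K) = ⊤)
    (A : (Module.End k K)ˣ) (hA : memS W A) :
    ∃ e : K ≃+* K, ∀ a : K, (↑A⁻¹ * ML k a * ↑A : Module.End k K) = ML k (e a) := by
  have hmul : ∀ a b : K, f A (a * b) = f A a * f A b := by
    intro a b
    apply ML_inj (k := k)
    rw [← conj_eq W hgen A hA, ML_mul a b, ML_mul, ← conj_eq W hgen A hA,
      ← conj_eq W hgen A hA, conj_conj]
  have hadd : ∀ a b : K, f A (a + b) = f A a + f A b := by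
    intro a b
    apply ML_inj (k := k)
    rw [← conj_eq W hgen A hA, ML_add a b, ML_add, ← conj_eq W hgen A hA,
      ← conj_eq W hgen A hA, mul_add, add_mul]
  have hone : f A 1 = 1 := by
    apply ML_inj (k := k)
    rw [← conj_eq W hgen A hA, ML_one, mul_one, A.inv_mul]
  refine ⟨{ toFun := f A, invFun := f A⁻¹,
            left_inv := f_inv_f W hgen A hA,
            right_inv := ?_,
            map_mul' := hmul, map_add' := hadd }, ?_⟩
  · intro b
    have := f_inv_f W hgen A⁻¹ (memS_inv W A hA) b
    rwa [inv_inv] at this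
  · intro a
    exact conj_eq W hgen A hA a


lemma ringEquiv_linear (hk : (⊥ : Subfield k) = ⊤) (φ : K ≃+* K) (r : k) (x : K) :
    φ (r • x) = r • φ x := by
  have hfix : ∀ r : k, φ (algebraMap k K r) = algebraMap k K r := by
    intro r
    let S : Subfield k :=
    { carrier := {r : k | φ (algebraMap k K r) = algebraMap k K r}
      mul_mem' := by
        intro x y hx hy
        show φ (algebraMap k K (x * y)) = algebraMap k K (x * y)
        rw [map_mul, map_mul]
        exact congrArg₂ (· * ·) hx hy
      one_mem' := by show φ (algebraMap k K 1) = algebraMap k K 1; simp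
      add_mem' := by
        intro x y hx hy
        show φ (algebraMap k K (x + y)) = algebraMap k K (x + y)
        rw [map_add, map_add]
        exact congrArg₂ (· + ·) hx hy
      zero_mem' := by show φ (algebraMap k K 0) = algebraMap k K 0; simp
      neg_mem' := by
        intro x hx
        show φ (algebraMap k K (-x)) = algebraMap k K (-x)
        rw [map_neg, map_neg]
        exact congrArg Neg.neg hx
      inv_mem' := by
        intro x hx
        show φ (algebraMap k K x⁻¹) = algebraMap k K x⁻¹
        rw [map_inv₀, map_inv₀]
        exact congrArg Inv.inv hx }
    have : r ∈ S := by
      have h := bot_le (a := S)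
      rw [hk] at h
      exact h trivial
    exact this
  rw [Algebra.smul_def, Algebra.smul_def, map_mul, hfix]

/-- The unit of `End` built from a ring automorphism (inverse direction). -/
noncomputable def unitOf (hk : (⊥ : Subfield k) = ⊤) (φ : K ≃+* K) :
    (Module.End k K)ˣ where
  val := { toFun := φ.symm, map_add' := fun x y => by simp,
           map_smul' := fun r x => by
             simpa using ringEquiv_linear hk φ.symm r x }
  inv := { toFun := φ, map_add' := fun x y => by simp,
           map_smul' := fun r x => by
             simpa using ringEquiv_linear hk φ r x }
  val_inv := by ext x; simp [Module.End.mul_apply]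
  inv_val := by ext x; simp [Module.End.mul_apply]

lemma unitOf_conj (hk : (⊥ : Subfield k) = ⊤) (φ : K ≃+* K) (a : K) :
    (↑(unitOf hk φ)⁻¹ * ML k a * ↑(unitOf hk φ) : Module.End k K) = ML k (φ a) := by
  have hinv : (↑(unitOf hk φ)⁻¹ : Module.End k K) = (unitOf hk φ).inv := rfl
  ext x
  simp only [Module.End.mul_apply, hinv]
  show φ (a * φ.symm x) = φ a * x
  rw [map_mul, RingEquiv.apply_symm_apply]

lemma memS_mul (W : Submodule k K) (A B : (Module.End k K)ˣ)
    (hA : memS W A) (hB : memS W B) : memS W (A * B) := by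
  have key : ∀ (a : K), ((↑(A * B)⁻¹ * ML k a * ↑(A * B) : Module.End k K)
      = ↑B⁻¹ * (↑A⁻¹ * ML k a * ↑A) * ↑B) := by
    intro a
    rw [mul_inv_rev, Units.val_mul, Units.val_mul]
    noncomm_ring
  constructor
  · intro a ha
    obtain ⟨b, hb, hab⟩ := hA.1 a ha
    obtain ⟨c, hc, hbc⟩ := hB.1 b hb
    exact ⟨c, hc, by rw [key, hab, hbc]⟩
  · intro c hc
    obtain ⟨b, hb, hbc⟩ := hB.2 c hc
    obtain ⟨a, ha, hab⟩ := hA.2 b hb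
    exact ⟨a, ha, by rw [key, hab, hbc]⟩

end Stmt14Aux

open Stmt14Aux

/-- let `k` be a prime field, `K` a field extension of `k`, `W` a
`k`-subspace with `k·1 ∩ W = 0` generating `K` as a field over `k` (and `K` perfect if
`char k = 2`). Then `A ↦ Ā`, where `Ā` is the unique field automorphism of `K` with
`A⁻¹ M_a A = M_{aĀ}` for all `a ∈ K`, is a group homomorphism on
`S(W) = {A ∈ GL_k(K) : A⁻¹M_W A = M_W}` with kernel `{M_c : c ∈ K*} ≅ K*` and image
`I(W) = {φ ∈ Aut(K) : Wφ = W}`; moreover `S(W) = I(W)·{M_c : c ∈ K*}`, realizing `S(W)`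
as the semidirect product `I(W) ⋉ K*`. -/
theorem stmt14 {k : Type*} [Field k] {K : Type*} [Field K] [Algebra k K]
    (hk : (⊥ : Subfield k) = ⊤)
    (W : Submodule k K)
    (hW : ∀ x ∈ W, x ∈ Set.range (algebraMap k K) → x = 0)
    (hgen : IntermediateField.adjoin k (W : Set K) = ⊤)
    (hperf : ringChar k = 2 → Function.Surjective (fun x : K => x * x)) :
    ∃ bar : (Module.End k K)ˣ → (K ≃+* K),
      -- `Ā` is a field automorphism satisfying `A⁻¹ M_a A = M_{aĀ}` for all `a ∈ K`
      (∀ A, memS W A → ∀ a : K, (↑A⁻¹ * ML k a * ↑A : Module.End k K) = ML k (bar A a)) ∧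
      -- `A ↦ Ā` is a group homomorphism on `S(W)`
      (∀ A B, memS W A → memS W B → ∀ x : K, bar (A * B) x = bar B (bar A x)) ∧
      -- its kernel is `N(W) = {M_c : c ∈ K*}`
      (∀ A, memS W A →
        ((∀ x : K, bar A x = x) ↔ ∃ c : K, c ≠ 0 ∧ (A : Module.End k K) = ML k c)) ∧
      -- its image is `I(W) = {φ ∈ Aut(K) : Wφ = W}`
      (∀ A, memS W A → ∀ a : K, a ∈ W ↔ bar A a ∈ W) ∧
      (∀ φ : K ≃+* K, (∀ a : K, a ∈ W ↔ φ a ∈ W) →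
        ∃ A, memS W A ∧ ∀ x : K, bar A x = φ x) ∧
      -- decomposition `S(W) = I(W)·N(W)` and the semidirect product multiplication
      (∀ A, memS W A → ∃ (φ : K ≃+* K) (c : K), c ≠ 0 ∧
        (∀ a : K, a ∈ W ↔ φ a ∈ W) ∧
        (∀ x : K, (A : Module.End k K) x = φ x * c) ∧
        (∀ (B : (Module.End k K)ˣ) (ψ : K ≃+* K) (d : K), memS W B → d ≠ 0 →
          (∀ a : K, a ∈ W ↔ ψ a ∈ W) → (∀ x : K, (B : Module.End k K) x = ψ x * d) →
            ∀ x : K, ((A * B : (Module.End k K)ˣ) : Module.End k K) x =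
              φ (ψ x) * (φ d * c))) := by
  classical
  set bar : (Module.End k K)ˣ → (K ≃+* K) := fun A =>
    if h : ∃ e : K ≃+* K, ∀ a : K, (↑A⁻¹ * ML k a * ↑A : Module.End k K) = ML k (e a)
    then h.choose else RingEquiv.refl K with hbar
  have bar_spec : ∀ A, memS W A →
      ∀ a : K, (↑A⁻¹ * ML k a * ↑A : Module.End k K) = ML k (bar A a) := by
    intro A hA a
    have h := exists_bar W hgen A hA
    rw [hbar]
    simp only [dif_pos h]
    exact h.choose_spec a
  -- conjunct 4 first, for reuse
  have h4 : ∀ A, memS W A → ∀ a : K, a ∈ W ↔ bar A a ∈ W := by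
    intro A hA a
    constructor
    · intro ha
      obtain ⟨b, hb, hab⟩ := hA.1 a ha
      have : bar A a = b := ML_inj (k := k) (by rw [← bar_spec A hA a, hab])
      rwa [this]
    · intro ha
      obtain ⟨a', ha', h2⟩ := hA.2 (bar A a) ha
      have : bar A a' = bar A a := ML_inj (k := k) (by rw [← bar_spec A hA a', h2])
      have : a' = a := (bar A).injective this
      rwa [← this]
  -- `A x = (bar A).symm x * A 1` for `A ∈ S(W)`
  have hdec : ∀ A, memS W A → ∀ x : K,
      (A : Module.End k K) x = (bar A).symm x * (A : Module.End k K) 1 := by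
    intro A hA x
    have h := bar_spec A hA ((bar A).symm x)
    rw [RingEquiv.apply_symm_apply] at h
    have h2 : ML k ((bar A).symm x) * (↑A : Module.End k K) = ↑A * ML k x := by
      calc ML k ((bar A).symm x) * (↑A : Module.End k K)
          = (↑A * ↑A⁻¹) * ML k ((bar A).symm x) * ↑A := by rw [A.mul_inv]; noncomm_ring
        _ = ↑A * (↑A⁻¹ * ML k ((bar A).symm x) * ↑A) := by noncomm_ring
        _ = ↑A * ML k x := by rw [h]
    have := congrArg (fun S : Module.End k K => S 1) h2
    simp only [Module.End.mul_apply, ML_apply, mul_one] at this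
    exact this.symm
  have hA1ne : ∀ A : (Module.End k K)ˣ, (A : Module.End k K) 1 ≠ 0 := by
    intro A hA1
    have h := congrArg (fun S : Module.End k K => S 1) A.inv_mul
    simp only [Module.End.mul_apply, Module.End.one_apply] at h
    rw [hA1, map_zero] at h
    exact one_ne_zero (α := K) h.symm
  refine ⟨bar, bar_spec, ?_, ?_, h4, ?_, ?_⟩
  · -- homomorphism
    intro A B hA hB x
    have hAB := memS_mul W A B hA hB
    apply ML_inj (k := k)
    rw [← bar_spec _ hAB x]
    have key : (↑(A * B)⁻¹ * ML k x * ↑(A * B) : Module.End k K)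
        = ↑B⁻¹ * (↑A⁻¹ * ML k x * ↑A) * ↑B := by
      rw [mul_inv_rev, Units.val_mul, Units.val_mul]; noncomm_ring
    rw [key, bar_spec A hA x, bar_spec B hB (bar A x)]
  · -- kernel
    intro A hA
    constructor
    · intro hid
      refine ⟨(A : Module.End k K) 1, hA1ne A, ?_⟩
      ext x
      have h := bar_spec A hA x
      rw [hid x] at h
      have h2 : ML k x * (↑A : Module.End k K) = ↑A * ML k x := by
        calc ML k x * (↑A : Module.End k K)
            = (↑A * ↑A⁻¹) * ML k x * ↑A := by rw [A.mul_inv]; noncomm_ring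
          _ = ↑A * (↑A⁻¹ * ML k x * ↑A) := by noncomm_ring
          _ = ↑A * ML k x := by rw [h]
      have := congrArg (fun S : Module.End k K => S 1) h2
      simp only [Module.End.mul_apply, ML_apply, mul_one] at this
      rw [ML_apply, mul_comm]
      exact this.symm
    · rintro ⟨c, hc, hAc⟩ a
      have hAinv : (↑A⁻¹ : Module.End k K) = ML k c⁻¹ := by
        have h1 : (↑A : Module.End k K) * ML k c⁻¹ = 1 := by
          rw [hAc, ← ML_mul, mul_inv_cancel₀ hc, ML_one]
        calc (↑A⁻¹ : Module.End k K) = ↑A⁻¹ * (↑A * ML k c⁻¹) := by rw [h1, mul_one]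
          _ = (↑A⁻¹ * ↑A) * ML k c⁻¹ := by rw [mul_assoc]
          _ = ML k c⁻¹ := by rw [A.inv_mul, one_mul]
      apply ML_inj (k := k)
      rw [← bar_spec A hA a, hAinv, hAc, ← ML_mul, ← ML_mul]
      congr 1
      field_simp
  · -- image
    intro φ hφ
    refine ⟨unitOf hk φ, ?_, ?_⟩
    · constructor
      · intro a ha
        exact ⟨φ a, (hφ a).1 ha, unitOf_conj hk φ a⟩
      · intro b hb
        refine ⟨φ.symm b, ?_, ?_⟩
        · have := hφ (φ.symm b)
          rw [RingEquiv.apply_symm_apply] at this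
          exact this.2 hb
        · rw [unitOf_conj hk φ (φ.symm b), RingEquiv.apply_symm_apply]
      
    · intro x
      have hmem : memS W (unitOf hk φ) := by
        constructor
        · intro a ha
          exact ⟨φ a, (hφ a).1 ha, unitOf_conj hk φ a⟩
        · intro b hb
          refine ⟨φ.symm b, ?_, ?_⟩
          · have := hφ (φ.symm b)
            rw [RingEquiv.apply_symm_apply] at this
            exact this.2 hb
          · rw [unitOf_conj hk φ (φ.symm b), RingEquiv.apply_symm_apply]
      apply ML_inj (k := k)
      rw [← bar_spec _ hmem x, unitOf_conj hk φ x]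
  · -- decomposition and semidirect structure
    intro A hA
    refine ⟨(bar A).symm, (A : Module.End k K) 1, hA1ne A, ?_, hdec A hA, ?_⟩
    · intro a
      have h := h4 A hA ((bar A).symm a)
      rw [RingEquiv.apply_symm_apply] at h
      exact h.symm
    · intro B ψ d hB hd hψ hBx x
      have : ((A * B : (Module.End k K)ˣ) : Module.End k K) x
          = (A : Module.End k K) ((B : Module.End k K) x) := by
        rw [Units.val_mul, Module.End.mul_apply]
      rw [this, hBx x, hdec A hA, map_mul, mul_assoc]
end

section
/- Let p be an odd prime, k = F_p, K = F_{p²}, and σ the Frobenius automorphism x ↦ x^p of K. With W_a = k(1 + a√d) for a ≠ 0 and W_0 = k√d as above, the automorphic loops Q_{k<K}(W_a) and Q_{k<K}(W_b) of order p³ are isomorphic if and only if b = a or b = -a. Consequently there are exactly (p+1)/2 pairwise non-isomorphic loops of order p³ of the form Q_{k<K}(W). -/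
/-- The `1`-dimensional subspaces `W_0 = k√d` and `W_a = k(1 + a√d)` (`a ≠ 0`) of
`K = F_{p²}`, where `s = √d`. -/
def Wline {p : ℕ} [Fact p.Prime] {K : Type*} [Field K] [Algebra (ZMod p) K]
    (s : K) (a : ZMod p) : Submodule (ZMod p) K :=
  Submodule.span (ZMod p) {if a = 0 then s else 1 + a • s}

/-- The loops `Q_{k<K}(W)` and `Q_{k<K}(W')` are isomorphic. -/
def LoopIso {k : Type*} [Field k] {K : Type*} [Field K] [Algebra k K]
    (W W' : Submodule k K) : Prop :=
  ∃ f : ↥W × K → ↥W' × K,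
    Function.Bijective f ∧ ∀ x y : ↥W × K, f (kqmul W x y) = kqmul W' (f x) (f y)


section Aux
variable {p : ℕ} [Fact p.Prime] {K : Type*} [Field K] [Algebra (ZMod p) K]
  {d : ZMod p} {s : K}

/-- independence of 1 and s -/
lemma indep1s (hd : ¬∃ y : ZMod p, y * y = d) (hs : s * s = algebraMap (ZMod p) K d)
    {x y : ZMod p} (h : algebraMap (ZMod p) K x + y • s = 0) : x = 0 ∧ y = 0 := by
  have hinj := (algebraMap (ZMod p) K).injective
  by_cases hy : y = 0
  · subst hy
    simp at h
    exact ⟨hinj (by simpa using h), rfl⟩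
  · exfalso
    apply hd
    refine ⟨-x / y, ?_⟩
    have hs' : s = algebraMap (ZMod p) K (-x / y) := by
      rw [Algebra.smul_def] at h
      have hy' : algebraMap (ZMod p) K y ≠ 0 := fun hc => hy (hinj (by simpa using hc))
      rw [map_div₀, map_neg, eq_div_iff hy']
      linear_combination h
    apply hinj
    rw [map_mul, ← hs', hs]

lemma s_ne_zero (hd : ¬∃ y : ZMod p, y * y = d) (hs : s * s = algebraMap (ZMod p) K d) :
    s ≠ 0 := by
  intro h
  exact hd ⟨0, by apply (algebraMap (ZMod p) K).injective; rw [map_mul, ← hs, h]; simp⟩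

/-- abbreviation for the generator -/
noncomputable def wgen (s : K) (a : ZMod p) : K := if a = 0 then s else 1 + a • s

lemma Wline_eq_span (s : K) (a : ZMod p) :
    Wline s a = Submodule.span (ZMod p) {wgen s a} := rfl

lemma wgen_ne_zero (hd : ¬∃ y : ZMod p, y * y = d) (hs : s * s = algebraMap (ZMod p) K d)
    (a : ZMod p) : wgen s a ≠ 0 := by
  unfold wgen
  split
  · exact s_ne_zero hd hs
  · intro h
    have := indep1s hd hs (x := 1) (y := a) (by rw [map_one]; exact h)
    simp at this

lemma mem_Wline {s : K} {a : ZMod p} {x : K} :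
    x ∈ Wline s a ↔ ∃ t : ZMod p, t • wgen s a = x := Submodule.mem_span_singleton

lemma wgen_mem (s : K) (a : ZMod p) : wgen s a ∈ Wline s a :=
  mem_Wline.mpr ⟨1, one_smul _ _⟩

/-- for any x in a W-line, 1 + x ≠ 0 -/
lemma one_add_ne (hd : ¬∃ y : ZMod p, y * y = d) (hs : s * s = algebraMap (ZMod p) K d)
    {a : ZMod p} {x : K} (hx : x ∈ Wline s a) : (1 : K) + x ≠ 0 := by
  obtain ⟨t, rfl⟩ := mem_Wline.mp hx
  intro h
  by_cases ha : a = 0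
  · rw [wgen, if_pos ha] at h
    have := indep1s hd hs (x := 1) (y := t) (by rw [map_one]; exact h)
    exact one_ne_zero this.1
  · rw [wgen, if_neg ha] at h
    have h1 : t • ((1:K) + a • s) = algebraMap (ZMod p) K t + (t*a) • s := by
      rw [smul_add, smul_smul, Algebra.smul_def, mul_one]
    rw [h1, ← add_assoc, ← map_one (algebraMap (ZMod p) K), ← map_add] at h
    obtain ⟨h2, h3⟩ := indep1s hd hs h
    rcases mul_eq_zero.mp h3 with h0 | h0
    · rw [h0, add_zero] at h2; exact one_ne_zero h2
    · exact ha h0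

lemma one_sub_ne (hd : ¬∃ y : ZMod p, y * y = d) (hs : s * s = algebraMap (ZMod p) K d)
    {a : ZMod p} {x : K} (hx : x ∈ Wline s a) : (1 : K) - x ≠ 0 := by
  have := one_add_ne hd hs (neg_mem hx)
  intro h
  exact this (by linear_combination h)

end Aux
section Forward
variable {p : ℕ} [Fact p.Prime] {K : Type*} [Field K] [Algebra (ZMod p) K]
  {d : ZMod p} {s : K}

lemma indep1s' (hd : ¬∃ y : ZMod p, y * y = d) (hs : s * s = algebraMap (ZMod p) K d)
    {x y : ZMod p} (h : algebraMap (ZMod p) K x + algebraMap (ZMod p) K y * s = 0) :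
    x = 0 ∧ y = 0 :=
  indep1s hd hs (by rw [Algebra.smul_def]; exact h)

/-- coordinates of an element of a W-line -/
lemma mem_line_coords (hd : ¬∃ y : ZMod p, y * y = d)
    (hs : s * s = algebraMap (ZMod p) K d) {b x y : ZMod p}
    (hmem : algebraMap (ZMod p) K x + algebraMap (ZMod p) K y * s ∈ Wline s b) :
    if b = 0 then x = 0 else y = x * b := by
  obtain ⟨t, ht⟩ := mem_Wline.mp hmem
  by_cases hb : b = 0
  · rw [if_pos hb]
    rw [wgen, if_pos hb, Algebra.smul_def] at ht
    have := indep1s' hd hs (x := x) (y := y - t)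
      (by rw [map_sub]; linear_combination -ht)
    exact this.1
  · rw [if_neg hb]
    rw [wgen, if_neg hb] at ht
    simp only [Algebra.smul_def] at ht
    have := indep1s' hd hs (x := t - x) (y := t * b - y)
      (by rw [map_sub, map_sub, map_mul]; linear_combination ht)
    obtain ⟨h1, h2⟩ := this
    have ht' : t = x := by linear_combination h1
    rw [← ht']
    linear_combination -h2

lemma forward (hodd : p ≠ 2) (hd : ¬∃ y : ZMod p, y * y = d)
    (hs : s * s = algebraMap (ZMod p) K d) {a b : ZMod p}
    (h : LoopIso (Wline s a) (Wline s b)) : b = a ∨ b = -a := by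
  obtain ⟨f, hfbij, hf⟩ := h
  have hp2 : (2 : ZMod p) ≠ 0 := by
    intro h2
    have : ((2 : ℕ) : ZMod p) = 0 := by exact_mod_cast h2
    rw [ZMod.natCast_eq_zero_iff] at this
    exact hodd ((Nat.prime_dvd_prime_iff_eq (Fact.out) Nat.prime_two).mp this)
  -- component form of the homomorphism property
  have hcomp : ∀ x y : ↥(Wline s a) × K,
      (f (kqmul _ x y)).1 = (f x).1 + (f y).1 ∧
      (f (kqmul _ x y)).2
        = (f x).2 * (1 + ((f y).1 : K)) + (f y).2 * (1 - ((f x).1 : K)) := by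
    intro x y; rw [hf x y]; exact ⟨rfl, rfl⟩
  -- special products
  have kq1 : ∀ u v : K, kqmul (Wline s a) (0, u) (0, v) = (0, u + v) := by
    intro u v; simp [kqmul]
  have kq2 : ∀ (c : ↥(Wline s a)) (v : K), kqmul _ (c, 0) (0, v) = (c, v * (1 - (c : K))) := by
    intro c v; simp [kqmul]
  have kq3 : ∀ (c : ↥(Wline s a)) (u : K), kqmul _ (0, u) (c, 0) = (c, u * (1 + (c : K))) := by
    intro c u; simp [kqmul]
  -- f fixes the identity
  have h00 := hcomp (0, 0) (0, 0)
  rw [show kqmul (Wline s a) (0,0) (0,0) = ((0 : ↥(Wline s a)), (0:K)) from by simp [kqmul]]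
    at h00
  have f00fst : (f (0, 0)).1 = 0 := left_eq_add.mp h00.1
  have f00snd : (f (0, 0)).2 = 0 := by linear_combination -h00.2
  -- θ additive
  have hθadd : ∀ u v : K, (f (0, u + v)).1 = (f (0, u)).1 + (f (0, v)).1 := by
    intro u v
    have := (hcomp (0, u) (0, v)).1
    rwa [kq1] at this
  -- generator
  set w₀ : K := wgen s a with hw₀def
  have hw₀mem : w₀ ∈ Wline s a := wgen_mem s a
  have hw₀ne : w₀ ≠ 0 := wgen_ne_zero hd hs a
  set c₀ : ↥(Wline s a) := ⟨w₀, hw₀mem⟩ with hc₀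
  -- θ vanishes
  have hθ : ∀ u : K, (f (0, u)).1 = 0 := by
    have key : ∀ t : K, (f (0, t * w₀)).1 = 0 := by
      intro t
      have A := (hcomp (c₀, 0) (0, t * (1 + w₀))).1
      rw [kq2] at A
      have B := (hcomp ((0 : ↥(Wline s a)), t * (1 - w₀)) (c₀, 0)).1
      rw [kq3] at B
      have hcoe : (c₀ : K) = w₀ := rfl
      rw [hcoe] at A B
      rw [show t * (1 + w₀) * (1 - w₀) = t * (1 - w₀) * (1 + w₀) from by ring] at A
      have hAB := A.symm.trans B
      -- hAB : (f (c₀,0)).1 + (f (0, t*(1+w₀))).1 = (f (0, t*(1-w₀))).1 + (f (c₀,0)).1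
      have hc : (f (0, t * (1 + w₀))).1 = (f (0, t * (1 - w₀))).1 := by
        rw [add_comm ((f (0, t * (1 - w₀))).1)] at hAB
        exact add_left_cancel hAB
      rw [show t * (1 + w₀) = t + t * w₀ from by ring,
          show t * (1 - w₀) = t + -(t * w₀) from by ring, hθadd, hθadd] at hc
      have hc2 : (f (0, t * w₀)).1 = (f (0, -(t * w₀))).1 := add_left_cancel hc
      have hneg : (f (0, t * w₀)).1 + (f (0, -(t * w₀))).1 = 0 := by
        have := hθadd (t * w₀) (-(t * w₀))
        rw [add_neg_cancel, f00fst] at this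
        exact this.symm
      rw [← hc2] at hneg
      have h2 : (2 : ZMod p) • (f (0, t * w₀)).1 = 0 := by rw [two_smul]; exact hneg
      rcases smul_eq_zero.mp h2 with hx | hx
      · exact absurd hx hp2
      · exact hx
    intro u
    have := key (u * w₀⁻¹)
    rwa [mul_assoc, inv_mul_cancel₀ hw₀ne, mul_one] at this
  -- g := second component on {0} × K
  have gadd : ∀ u v : K, (f (0, u + v)).2 = (f (0, u)).2 + (f (0, v)).2 := by
    intro u v
    have := (hcomp (0, u) (0, v)).2
    rw [kq1, hθ, hθ] at this
    simpa using this
  have ginj : ∀ u v : K, (f (0, u)).2 = (f (0, v)).2 → u = v := by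
    intro u v huv
    have : f (0, u) = f (0, v) := Prod.ext (by rw [hθ u, hθ v]) huv
    have := hfbij.1 this
    simpa using this
  have gneg : ∀ u : K, (f (0, -u)).2 = -(f (0, u)).2 := by
    intro u
    have := gadd u (-u)
    rw [add_neg_cancel, f00snd] at this
    linear_combination -this
  -- the key multiplicative relation: g(t * c) = η(c) * g(t)
  have hIII : ∀ (c : ↥(Wline s a)) (t : K),
      (f (0, t * (c : K))).2 = ((f (c, 0)).1 : K) * (f (0, t)).2 := by
    intro c t
    have A := (hcomp (c, 0) (0, t * (1 + (c : K)))).2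
    rw [kq2, hθ] at A
    have B := (hcomp ((0 : ↥(Wline s a)), t * (1 - (c : K))) (c, 0)).2
    rw [kq3, hθ] at B
    simp only [ZeroMemClass.coe_zero, add_zero, sub_zero, mul_one] at A B
    rw [show t * (1 + (c:K)) * (1 - (c:K)) = t * (1 - (c:K)) * (1 + (c:K)) from by ring] at A
    have hAB := A.symm.trans B
    rw [show t * (1 + (c:K)) = t + t * (c:K) from by ring,
        show t * (1 - (c:K)) = t + -(t * (c:K)) from by ring, gadd, gadd, gneg] at hAB
    -- hAB : F + (gt + G)*(1-e) = (gt - G)*(1+e) + F  roughly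
    have h2K : (2 : K) ≠ 0 := by
      haveI : CharP K p := charP_of_injective_algebraMap (algebraMap (ZMod p) K).injective p
      intro h2
      have hn : ((2 : ℕ) : K) = 0 := by exact_mod_cast h2
      have hdvd := (CharP.cast_eq_zero_iff K p 2).mp hn
      exact hodd ((Nat.prime_dvd_prime_iff_eq (Fact.out) Nat.prime_two).mp hdvd)
    have h2G : (2:K) * (f (0, t * (c:K))).2 = (2:K) * (((f (c, 0)).1 : K) * (f (0, t)).2) := by
      linear_combination hAB
    exact mul_left_cancel₀ h2K h2G
  -- the distinguished image element
  set eK : K := ((f (c₀, 0)).1 : K) with heK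
  have heKmem : eK ∈ Wline s b := ((f (c₀, 0)).1).2
  have hIII0 : ∀ t : K, (f (0, t * w₀)).2 = eK * (f (0, t)).2 := fun t => hIII c₀ t
  have g1ne : (f (0, (1:K))).2 ≠ 0 := by
    intro hg
    have : (1:K) = 0 := ginj 1 0 (by rw [hg, f00snd])
    exact one_ne_zero this
  -- quadratic relation for eK
  have t2 := hIII0 1
  rw [one_mul] at t2
  have gww : (f (0, w₀ * w₀)).2 = eK * eK * (f (0, (1:K))).2 := by
    have t1 := hIII0 w₀
    rw [t2] at t1
    rw [t1]; ring
  -- scalar-linearity of g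
  have gsc : ∀ (c : ZMod p) (x : K),
      (f (0, algebraMap (ZMod p) K c * x)).2 = algebraMap (ZMod p) K c * (f (0, x)).2 := by
    intro c x
    let G : K →+ K := AddMonoidHom.mk' (fun u => (f (0, u)).2) gadd
    have hGn : ∀ (n : ℕ) (y : K), (f (0, (n : K) * y)).2 = (n : K) * (f (0, y)).2 := by
      intro n y
      have := map_nsmul G n y
      simpa [G, nsmul_eq_mul] using this
    have hval : algebraMap (ZMod p) K c = ((c.val : ℕ) : K) := by
      conv_lhs => rw [← ZMod.natCast_rightInverse c]
      rw [map_natCast]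
    rw [hval]
    exact hGn c.val x
  -- case analysis on a
  by_cases ha : a = 0
  · -- w₀ = s, eK² = d, so eK = ±s
    have hw : w₀ = s := by rw [hw₀def, wgen, if_pos ha]
    have hdval : (f (0, w₀ * w₀)).2 = algebraMap (ZMod p) K d * (f (0, (1:K))).2 := by
      rw [hw, hs, ← mul_one (algebraMap (ZMod p) K d), gsc d 1]
      rw [mul_one]
    have hq : eK * eK = algebraMap (ZMod p) K d := by
      have := gww.symm.trans hdval
      exact mul_right_cancel₀ g1ne this
    have hfac : (eK - s) * (eK + s) = 0 := by
      rw [← hs] at hq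
      linear_combination hq
    rcases mul_eq_zero.mp hfac with hx | hx
    · -- eK = s
      have heq : eK = algebraMap (ZMod p) K 0 + algebraMap (ZMod p) K 1 * s := by
        rw [map_zero, map_one]; linear_combination hx
      rw [heq] at heKmem
      have := mem_line_coords hd hs heKmem
      by_cases hb : b = 0
      · left; rw [hb, ha]
      · rw [if_neg hb] at this
        rw [zero_mul] at this
        exact absurd this one_ne_zero
    · -- eK = -s
      have heq : eK = algebraMap (ZMod p) K 0 + algebraMap (ZMod p) K (-1) * s := by
        rw [map_zero, map_neg, map_one]; linear_combination hx
      rw [heq] at heKmem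
      have := mem_line_coords hd hs heKmem
      by_cases hb : b = 0
      · left; rw [hb, ha]
      · rw [if_neg hb] at this
        rw [zero_mul] at this
        exact absurd this (by intro hcon; exact one_ne_zero (neg_eq_zero.mp hcon))
  · -- w₀ = 1 + a·s
    have hw : w₀ = 1 + a • s := by rw [hw₀def, wgen, if_neg ha]
    have hw2 : w₀ * w₀ = algebraMap (ZMod p) K (a * a * d - 1) + 2 * w₀ := by
      rw [hw]
      simp only [Algebra.smul_def]
      rw [map_sub, map_mul, map_mul, map_one]
      linear_combination (algebraMap (ZMod p) K a * algebraMap (ZMod p) K a) * hs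
    have hdval : (f (0, w₀ * w₀)).2
        = algebraMap (ZMod p) K (a * a * d - 1) * (f (0, (1:K))).2 + 2 * (eK * (f (0, (1:K))).2) := by
      rw [hw2]
      rw [gadd]
      have e1 : (f (0, algebraMap (ZMod p) K (a * a * d - 1))).2
          = algebraMap (ZMod p) K (a * a * d - 1) * (f (0, (1:K))).2 := by
        rw [← mul_one (algebraMap (ZMod p) K (a * a * d - 1)), gsc]
        rw [mul_one]
      have e2 : (f (0, 2 * w₀)).2 = 2 * (eK * (f (0, (1:K))).2) := by
        rw [show (2:K) * w₀ = w₀ + w₀ from by ring, gadd]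
        rw [show (f (0, w₀)).2 = eK * (f (0, (1:K))).2 from t2]
        ring
      rw [e1, e2]
    have hq : eK * eK = algebraMap (ZMod p) K (a * a * d - 1) + 2 * eK := by
      have := gww.symm.trans hdval
      have h' : (eK * eK) * (f (0, (1:K))).2
          = (algebraMap (ZMod p) K (a * a * d - 1) + 2 * eK) * (f (0, (1:K))).2 := by
        linear_combination this
      exact mul_right_cancel₀ g1ne h'
    have hfac : (eK - w₀) * (eK + w₀ - 2) = 0 := by
      linear_combination hq - hw2
    rcases mul_eq_zero.mp hfac with hx | hx
    · -- eK = w₀ = 1 + a s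
      have heq : eK = algebraMap (ZMod p) K 1 + algebraMap (ZMod p) K a * s := by
        rw [map_one, ← Algebra.smul_def]
        rw [hw] at hx
        linear_combination hx
      rw [heq] at heKmem
      have := mem_line_coords hd hs heKmem
      by_cases hb : b = 0
      · rw [if_pos hb] at this
        exact absurd this one_ne_zero
      · rw [if_neg hb, one_mul] at this
        left; exact this.symm
    · -- eK = 2 - w₀ = 1 - a s
      have heq : eK = algebraMap (ZMod p) K 1 + algebraMap (ZMod p) K (-a) * s := by
        rw [map_one, map_neg]
        rw [hw] at hx
        have hx' : eK + (1 + algebraMap (ZMod p) K a * s) - 2 = 0 := by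
          rw [← Algebra.smul_def]; exact hx
        linear_combination hx'
      rw [heq] at heKmem
      have := mem_line_coords hd hs heKmem
      by_cases hb : b = 0
      · rw [if_pos hb] at this
        exact absurd this one_ne_zero
      · rw [if_neg hb, one_mul] at this
        right; exact this.symm

end Forward

section Backward
variable {p : ℕ} [Fact p.Prime] {K : Type*} [Field K] [Algebra (ZMod p) K]
  {d : ZMod p} {s : K}

lemma loopIso_refl (W : Submodule (ZMod p) K) : LoopIso W W :=
  ⟨id, Function.bijective_id, fun _ _ => rfl⟩

lemma loopIso_neg (hodd : p ≠ 2) (hd : ¬∃ y : ZMod p, y * y = d)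
    (hs : s * s = algebraMap (ZMod p) K d) (hcard : Nat.card K = p ^ 2) (a : ZMod p) :
    LoopIso (Wline s a) (Wline s (-a)) := by
  haveI : CharP K p := charP_of_injective_algebraMap (algebraMap (ZMod p) K).injective p
  have hKfin : Finite K := Nat.finite_of_card_ne_zero (by rw [hcard]; exact pow_ne_zero 2 (Fact.out : p.Prime).ne_zero)
  let _ : Fintype K := Fintype.ofFinite K
  have hcards : Fintype.card K = p ^ 2 := by rw [← Nat.card_eq_fintype_card, hcard]
  set σ : K →+* K := frobenius K p with hσdef
  have hσpow : ∀ x : K, σ x = x ^ p := fun x => rfl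
  have hσσ : ∀ x : K, σ (σ x) = x := by
    intro x
    rw [hσpow, hσpow, ← pow_mul, show p * p = Fintype.card K from by rw [hcards]; ring]
    exact FiniteField.pow_card x
  have hσalg : ∀ c : ZMod p, σ (algebraMap (ZMod p) K c) = algebraMap (ZMod p) K c := by
    intro c
    rw [hσpow, ← map_pow, ZMod.pow_card]
  have hp : p = 2 * (p / 2) + 1 := by
    have h2 := (Fact.out : p.Prime).two_le
    have hodd' : p % 2 = 1 := Nat.odd_iff.mp ((Fact.out : p.Prime).odd_of_ne_two hodd)
    omega
  have hd0 : d ≠ 0 := by rintro rfl; exact hd ⟨0, by ring⟩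
  have heul : d ^ (p / 2) = -1 := by
    have hsq : d ^ (p / 2) * d ^ (p / 2) = 1 := by
      rw [← pow_add, show p / 2 + p / 2 = p - 1 from by omega]
      exact ZMod.pow_card_sub_one_eq_one hd0
    rcases mul_self_eq_one_iff.mp hsq with h1 | h1
    · exfalso
      apply hd
      obtain ⟨r, hr⟩ := (ZMod.euler_criterion p hd0).mpr h1
      exact ⟨r, hr.symm⟩
    · exact h1
  have hσs : σ s = -s := by
    rw [hσpow]
    conv_lhs => rw [hp]
    rw [pow_succ, pow_mul, show s ^ 2 = s * s from sq s, hs, ← map_pow, heul, map_neg, map_one]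
    ring
  have hσmem : ∀ (x : K) (c : ZMod p), x ∈ Wline s c → σ x ∈ Wline s (-c) := by
    intro x c hx
    obtain ⟨t, rfl⟩ := mem_Wline.mp hx
    rw [mem_Wline]
    by_cases hc : c = 0
    · subst hc
      rw [neg_zero]
      refine ⟨-t, ?_⟩
      rw [wgen, if_pos rfl, Algebra.smul_def, Algebra.smul_def, map_mul, hσalg, hσs, map_neg]
      ring
    · have hc' : -c ≠ 0 := fun h => hc (neg_eq_zero.mp h)
      refine ⟨t, ?_⟩
      rw [wgen, if_neg hc', wgen, if_neg hc]
      simp only [Algebra.smul_def]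
      rw [map_mul, hσalg, map_add, map_one, map_mul, hσalg, hσs, map_neg]
      ring
  have hσmem' : ∀ (x : K), x ∈ Wline s (-a) → σ x ∈ Wline s a := by
    intro x hx
    have := hσmem x (-a) hx
    rwa [neg_neg] at this
  refine ⟨fun x => (⟨σ (x.1 : K), hσmem _ a x.1.2⟩, σ x.2), ?_, ?_⟩
  · refine Function.bijective_iff_has_inverse.mpr
      ⟨fun y => (⟨σ (y.1 : K), hσmem' _ y.1.2⟩, σ y.2), ?_, ?_⟩
    · intro x
      refine Prod.ext (Subtype.ext ?_) ?_ <;> exact hσσ _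
    · intro y
      refine Prod.ext (Subtype.ext ?_) ?_ <;> exact hσσ _
  · intro x y
    refine Prod.ext (Subtype.ext ?_) ?_
    · show σ ((x.1 : K) + (y.1 : K)) = σ (x.1 : K) + σ (y.1 : K)
      exact map_add σ _ _
    · show σ (x.2 * (1 + (y.1 : K)) + y.2 * (1 - (x.1 : K)))
        = σ x.2 * (1 + σ (y.1 : K)) + σ y.2 * (1 - σ (x.1 : K))
      rw [map_add, map_mul, map_mul, map_add, map_one, map_sub, map_one]

end Backward

/-- for an odd prime `p`, `k = F_p`, `K = F_{p²}`, the automorphic loops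
`Q_{k<K}(W_a)` and `Q_{k<K}(W_b)` of order `p³` are isomorphic iff `b = a` or `b = -a`;
consequently there are exactly `(p+1)/2` pairwise non-isomorphic loops of order `p³` of
the form `Q_{k<K}(W)` with `W` among the `W_a`. -/
theorem stmt16 (p : ℕ) [Fact p.Prime] (hodd : p ≠ 2)
    (K : Type*) [Field K] [Algebra (ZMod p) K] (hcard : Nat.card K = p ^ 2)
    (d : ZMod p) (hd : ¬∃ y : ZMod p, y * y = d)
    (s : K) (hs : s * s = algebraMap (ZMod p) K d) :
    (∀ a b : ZMod p, LoopIso (Wline s a) (Wline s b) ↔ (b = a ∨ b = -a)) ∧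
    (∃ T : Finset (ZMod p), T.card = (p + 1) / 2 ∧
      ∀ a : ZMod p, ∃! b : ZMod p, b ∈ T ∧ LoopIso (Wline s a) (Wline s b)) := by
  have hiff : ∀ a b : ZMod p, LoopIso (Wline s a) (Wline s b) ↔ (b = a ∨ b = -a) := by
    intro a b
    constructor
    · exact forward hodd hd hs
    · rintro (rfl | rfl)
      · exact loopIso_refl _
      · exact loopIso_neg hodd hd hs hcard a
  refine ⟨hiff, ?_⟩
  have hp := (Fact.out : p.Prime)
  have hodd' : p % 2 = 1 := Nat.odd_iff.mp (hp.odd_of_ne_two hodd)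
  have hp2 : 2 ≤ p := hp.two_le
  haveI : NeZero p := ⟨by omega⟩
  set T : Finset (ZMod p) := (Finset.range (p / 2 + 1)).image (Nat.cast : ℕ → ZMod p) with hT
  have hmemT : ∀ x : ZMod p, x ∈ T ↔ x.val ≤ p / 2 := by
    intro x
    rw [hT]
    simp only [Finset.mem_image, Finset.mem_range]
    constructor
    · rintro ⟨n, hn, rfl⟩
      rw [ZMod.val_cast_of_lt (by omega)]
      omega
    · intro hx
      exact ⟨x.val, by omega, ZMod.natCast_rightInverse x⟩
  refine ⟨T, ?_, ?_⟩
  · rw [hT, Finset.card_image_of_injOn, Finset.card_range]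
    · omega
    · intro m hm n hn hmn
      simp only [Finset.coe_range, Set.mem_Iio] at hm hn
      rw [← ZMod.val_cast_of_lt (show m < p by omega), ← ZMod.val_cast_of_lt (show n < p by omega),
        hmn]
  · intro a
    have hvlt : a.val < p := ZMod.val_lt a
    by_cases hval : a.val ≤ p / 2
    · refine ⟨a, ⟨(hmemT a).mpr hval, (hiff a a).mpr (Or.inl rfl)⟩, ?_⟩
      rintro b ⟨hbT, hbiso⟩
      rcases (hiff a b).mp hbiso with rfl | rfl
      · rfl
      · by_cases ha0 : a = 0
        · rw [ha0, neg_zero]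
        · exfalso
          have hv := (hmemT (-a)).mp hbT
          rw [ZMod.neg_val, if_neg ha0] at hv
          have hva0 : a.val ≠ 0 := fun h => ha0 ((ZMod.val_eq_zero a).mp h)
          omega
    · have ha0 : a ≠ 0 := fun h => hval (by rw [h, ZMod.val_zero]; omega)
      have hvneg : (-a).val = p - a.val := by rw [ZMod.neg_val, if_neg ha0]
      refine ⟨-a, ⟨(hmemT (-a)).mpr (by omega), (hiff a (-a)).mpr (Or.inr rfl)⟩, ?_⟩
      rintro b ⟨hbT, hbiso⟩
      rcases (hiff a b).mp hbiso with rfl | rfl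
      · exact absurd ((hmemT _).mp hbT) hval
      · rfl
end

section
/- Let p be an odd prime, k = F_p, K = F_p((t)) the field of formal Laurent series, W = F_p·t, and Q = Q_{k<K}(W). Let L be the subloop of Q generated by (t,0) and (0,1). Then L = W × U, where U is the localization of F_p[t] at the multiplicative set {1 + a : a ∈ W} = {1 + it : i ∈ F_p} (viewed inside F_p((t))). Moreover L is infinite, nonassociative, 2-generated, of exponent p, and has a surjective homomorphism onto the cyclic group F_p with kernel the abelian group (U,+). -/
/-- The element `t` of `K = F_p((t))`. -/
noncomputable def tK (p : ℕ) [Fact p.Prime] : LaurentSeries (ZMod p) :=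
  HahnSeries.single 1 1

/-- The subspace `W = F_p·t` of `K = F_p((t))`. -/
noncomputable def Wt (p : ℕ) [Fact p.Prime] : Submodule (ZMod p) (LaurentSeries (ZMod p)) :=
  Submodule.span (ZMod p) {tK p}

/-- The localization `U` of `F_p[t]` at the multiplicative set `{1 + it : i ∈ F_p}`,
viewed inside `F_p((t))`. -/
noncomputable def U18 (p : ℕ) [Fact p.Prime] : Set (LaurentSeries (ZMod p)) :=
  {x | ∃ f g : Polynomial (ZMod p),
    g ∈ Submonoid.closure {h : Polynomial (ZMod p) |
      ∃ i : ZMod p, h = 1 + Polynomial.C i * Polynomial.X} ∧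
    x = Polynomial.aeval (tK p) f / Polynomial.aeval (tK p) g}

/-- Multiplication of the loop `Q = Q_{k<K}(W)` on `W × K`, `K = F_p((t))`, `W = F_p·t`. -/
noncomputable def m18 (p : ℕ) [Fact p.Prime]
    (x y : ↥(Wt p) × LaurentSeries (ZMod p)) : ↥(Wt p) × LaurentSeries (ZMod p) :=
  (x.1 + y.1, x.2 * (1 + (y.1 : LaurentSeries (ZMod p))) +
    y.2 * (1 - (x.1 : LaurentSeries (ZMod p))))

/-- Left division in `Q`: `(a,u)\(b,v) = (b-a, (v - u(1+b-a))(1-a)⁻¹)`. -/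
noncomputable def ld18 (p : ℕ) [Fact p.Prime]
    (x y : ↥(Wt p) × LaurentSeries (ZMod p)) : ↥(Wt p) × LaurentSeries (ZMod p) :=
  (y.1 - x.1, (y.2 - x.2 * (1 + ((y.1 : LaurentSeries (ZMod p)) - (x.1 : LaurentSeries (ZMod p))))) *
    (1 - (x.1 : LaurentSeries (ZMod p)))⁻¹)

/-- Right division in `Q`: `(b,v)/(a,u) = (b-a, (v - u(1-(b-a)))(1+a)⁻¹)`. -/
noncomputable def rd18 (p : ℕ) [Fact p.Prime]
    (y x : ↥(Wt p) × LaurentSeries (ZMod p)) : ↥(Wt p) × LaurentSeries (ZMod p) :=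
  (y.1 - x.1, (y.2 - x.2 * (1 - ((y.1 : LaurentSeries (ZMod p)) - (x.1 : LaurentSeries (ZMod p))))) *
    (1 + (x.1 : LaurentSeries (ZMod p)))⁻¹)

/-- The subloop `L = ⟨(t,0), (0,1)⟩` of `Q`: the smallest subset containing `(t,0)` and
`(0,1)` and closed under multiplication and both divisions. -/
noncomputable def L18 (p : ℕ) [Fact p.Prime] : Set (↥(Wt p) × LaurentSeries (ZMod p)) :=
  ⋂₀ {S | (⟨⟨tK p, Submodule.mem_span_singleton_self _⟩, 0⟩ : ↥(Wt p) × LaurentSeries (ZMod p)) ∈ S ∧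
    ((0, 1) : ↥(Wt p) × LaurentSeries (ZMod p)) ∈ S ∧
    (∀ x ∈ S, ∀ y ∈ S, m18 p x y ∈ S) ∧
    (∀ x ∈ S, ∀ y ∈ S, ld18 p x y ∈ S) ∧
    (∀ x ∈ S, ∀ y ∈ S, rd18 p x y ∈ S)}

/-! ### Auxiliary material -/

open Polynomial

section Aux

variable {p : ℕ} [Fact p.Prime]

/-- The generator `t` as an element of `W`. -/
noncomputable def tau (p : ℕ) [Fact p.Prime] : ↥(Wt p) :=
  ⟨tK p, Submodule.mem_span_singleton_self _⟩

@[simp] lemma coe_tau : ((tau p : ↥(Wt p)) : LaurentSeries (ZMod p)) = tK p := rfl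

lemma algK (c : ZMod p) :
    algebraMap (ZMod p) (LaurentSeries (ZMod p)) c = HahnSeries.single 0 c := by
  rw [HahnSeries.algebraMap_apply', PowerSeries.algebraMap_apply]
  simp [HahnSeries.ofPowerSeries_C, HahnSeries.C_apply]

lemma smul_eq_alg (c : ZMod p) (x : LaurentSeries (ZMod p)) :
    c • x = algebraMap (ZMod p) (LaurentSeries (ZMod p)) c * x := by
  rw [algK]; ext a; rw [HahnSeries.coeff_single_zero_mul]; rfl

lemma one_add_smul_ne (c : ZMod p) : (1 : LaurentSeries (ZMod p)) + c • tK p ≠ 0 := by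
  intro h
  have h0 := congrArg (fun s : LaurentSeries (ZMod p) => s.coeff 0) h
  simp [tK, HahnSeries.coeff_single_of_ne (by norm_num : (0 : ℤ) ≠ 1)] at h0

lemma wsub_self (a : ↥(Wt p)) : a - a = (0 : ↥(Wt p)) := by
  apply Subtype.ext
  push_cast
  exact sub_self _

lemma wadd_neg (a : ↥(Wt p)) : a + -a = (0 : ↥(Wt p)) := by
  apply Subtype.ext
  push_cast
  exact add_neg_cancel _

lemma wt_rep (a : ↥(Wt p)) : ∃ c : ZMod p, (a : LaurentSeries (ZMod p)) = c • tK p := by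
  obtain ⟨c, hc⟩ := Submodule.mem_span_singleton.mp a.2
  exact ⟨c, hc.symm⟩

lemma one_add_coe_ne (a : ↥(Wt p)) :
    (1 : LaurentSeries (ZMod p)) + (a : LaurentSeries (ZMod p)) ≠ 0 := by
  obtain ⟨c, hc⟩ := wt_rep a
  rw [hc]; exact one_add_smul_ne c

lemma one_sub_coe_ne (a : ↥(Wt p)) :
    (1 : LaurentSeries (ZMod p)) - (a : LaurentSeries (ZMod p)) ≠ 0 := by
  obtain ⟨c, hc⟩ := wt_rep a
  have e : (1 : LaurentSeries (ZMod p)) - c • tK p = 1 + (-c) • tK p := by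
    rw [smul_eq_alg, smul_eq_alg, map_neg]; ring
  rw [hc, e]
  exact one_add_smul_ne (-c)

lemma aeval_gen (i : ZMod p) :
    Polynomial.aeval (tK p) (1 + C i * X) = 1 + i • tK p := by
  rw [smul_eq_alg]; simp

lemma aeval_closure_ne {g : Polynomial (ZMod p)}
    (hg : g ∈ Submonoid.closure {h : Polynomial (ZMod p) |
      ∃ i : ZMod p, h = 1 + Polynomial.C i * Polynomial.X}) :
    Polynomial.aeval (tK p) g ≠ 0 := by
  induction hg using Submonoid.closure_induction with
  | mem x hx => obtain ⟨i, rfl⟩ := hx; rw [aeval_gen]; exact one_add_smul_ne i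
  | one => simp
  | mul x y hx hy ihx ihy => rw [map_mul]; exact mul_ne_zero ihx ihy

lemma U_zero : (0 : LaurentSeries (ZMod p)) ∈ U18 p :=
  ⟨0, 1, one_mem _, by simp⟩

lemma U_one : (1 : LaurentSeries (ZMod p)) ∈ U18 p :=
  ⟨1, 1, one_mem _, by simp⟩

lemma U_tpow (n : ℕ) : (tK p) ^ n ∈ U18 p :=
  ⟨X ^ n, 1, one_mem _, by simp⟩

end Aux
section Aux2

variable {p : ℕ} [Fact p.Prime]

lemma smul_tK_eq (c : ZMod p) :
    c • tK p = algebraMap (ZMod p) (LaurentSeries (ZMod p)) c * tK p := smul_eq_alg c _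

lemma one_sub_alg_ne (i : ZMod p) :
    (1 : LaurentSeries (ZMod p)) - algebraMap (ZMod p) (LaurentSeries (ZMod p)) i * tK p ≠ 0 := by
  have e : (1 : LaurentSeries (ZMod p)) - algebraMap (ZMod p) (LaurentSeries (ZMod p)) i * tK p
      = 1 + (-i) • tK p := by rw [smul_eq_alg, map_neg]; ring
  rw [e]; exact one_add_smul_ne (-i)

lemma one_add_alg_ne (i : ZMod p) :
    (1 : LaurentSeries (ZMod p)) + algebraMap (ZMod p) (LaurentSeries (ZMod p)) i * tK p ≠ 0 := by
  rw [← smul_eq_alg]; exact one_add_smul_ne i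

lemma U_m {u v : LaurentSeries (ZMod p)} (hu : u ∈ U18 p) (hv : v ∈ U18 p)
    (a b : ↥(Wt p)) :
    u * (1 + (b : LaurentSeries (ZMod p))) + v * (1 - (a : LaurentSeries (ZMod p))) ∈ U18 p := by
  obtain ⟨f1, g1, hg1, rfl⟩ := hu
  obtain ⟨f2, g2, hg2, rfl⟩ := hv
  obtain ⟨i, hi⟩ := wt_rep a
  obtain ⟨j, hj⟩ := wt_rep b
  refine ⟨f1 * (1 + C j * X) * g2 + f2 * (1 + C (-i) * X) * g1, g1 * g2,
    mul_mem hg1 hg2, ?_⟩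
  have h1 := aeval_closure_ne hg1
  have h2 := aeval_closure_ne hg2
  rw [hi, hj, smul_tK_eq, smul_tK_eq]
  simp only [map_add, map_mul, map_one, map_neg, Polynomial.aeval_X, Polynomial.aeval_C]
  rw [eq_div_iff (mul_ne_zero h1 h2)]
  field_simp
  ring

lemma U_ld {u v : LaurentSeries (ZMod p)} (hu : u ∈ U18 p) (hv : v ∈ U18 p)
    (a b : ↥(Wt p)) :
    (v - u * (1 + ((b : LaurentSeries (ZMod p)) - (a : LaurentSeries (ZMod p))))) *
      (1 - (a : LaurentSeries (ZMod p)))⁻¹ ∈ U18 p := by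
  obtain ⟨f1, g1, hg1, rfl⟩ := hu
  obtain ⟨f2, g2, hg2, rfl⟩ := hv
  obtain ⟨i, hi⟩ := wt_rep a
  obtain ⟨j, hj⟩ := wt_rep b
  refine ⟨f2 * g1 - f1 * (1 + C (j - i) * X) * g2, g1 * g2 * (1 + C (-i) * X),
    mul_mem (mul_mem hg1 hg2) (Submonoid.subset_closure ⟨-i, rfl⟩), ?_⟩
  have h1 := aeval_closure_ne hg1
  have h2 := aeval_closure_ne hg2
  have h3 : (1 : LaurentSeries (ZMod p)) -
      algebraMap (ZMod p) (LaurentSeries (ZMod p)) i * tK p ≠ 0 := one_sub_alg_ne i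
  have h3' : (1 : LaurentSeries (ZMod p)) +
      (-(algebraMap (ZMod p) (LaurentSeries (ZMod p)) i)) * tK p ≠ 0 := by
      intro hcon; exact h3 (by linear_combination hcon)
  rw [hi, hj, smul_tK_eq, smul_tK_eq]
  simp only [map_add, map_mul, map_one, map_neg, map_sub, Polynomial.aeval_X, Polynomial.aeval_C]
  rw [eq_div_iff (mul_ne_zero (mul_ne_zero h1 h2) h3')]
  field_simp
  rw [div_eq_iff (by intro hc; exact h3 (by linear_combination hc))]
  ring

lemma U_rd {u v : LaurentSeries (ZMod p)} (hu : u ∈ U18 p) (hv : v ∈ U18 p)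
    (a b : ↥(Wt p)) :
    (u - v * (1 - ((a : LaurentSeries (ZMod p)) - (b : LaurentSeries (ZMod p))))) *
      (1 + (b : LaurentSeries (ZMod p)))⁻¹ ∈ U18 p := by
  obtain ⟨f1, g1, hg1, rfl⟩ := hu
  obtain ⟨f2, g2, hg2, rfl⟩ := hv
  obtain ⟨i, hi⟩ := wt_rep a
  obtain ⟨j, hj⟩ := wt_rep b
  refine ⟨f1 * g2 - f2 * (1 + C (j - i) * X) * g1, g1 * g2 * (1 + C j * X),
    mul_mem (mul_mem hg1 hg2) (Submonoid.subset_closure ⟨j, rfl⟩), ?_⟩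
  have h1 := aeval_closure_ne hg1
  have h2 := aeval_closure_ne hg2
  have h3 : (1 : LaurentSeries (ZMod p)) +
      algebraMap (ZMod p) (LaurentSeries (ZMod p)) j * tK p ≠ 0 := one_add_alg_ne j
  rw [hi, hj, smul_tK_eq, smul_tK_eq]
  simp only [map_add, map_mul, map_one, map_neg, map_sub, Polynomial.aeval_X, Polynomial.aeval_C]
  rw [eq_div_iff (mul_ne_zero (mul_ne_zero h1 h2) h3)]
  field_simp
  rw [div_eq_iff (by intro hc; exact h3 (by linear_combination hc))]
  ring

/-- The closure property defining `L18`. -/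
def isQSub (p : ℕ) [Fact p.Prime] (S : Set (↥(Wt p) × LaurentSeries (ZMod p))) : Prop :=
  (⟨⟨tK p, Submodule.mem_span_singleton_self _⟩, 0⟩ : ↥(Wt p) × LaurentSeries (ZMod p)) ∈ S ∧
  ((0, 1) : ↥(Wt p) × LaurentSeries (ZMod p)) ∈ S ∧
  (∀ x ∈ S, ∀ y ∈ S, m18 p x y ∈ S) ∧
  (∀ x ∈ S, ∀ y ∈ S, ld18 p x y ∈ S) ∧
  (∀ x ∈ S, ∀ y ∈ S, rd18 p x y ∈ S)

lemma L18_def : L18 p = ⋂₀ {S | isQSub p S} := rfl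

lemma S0_isQSub : isQSub p {x : ↥(Wt p) × LaurentSeries (ZMod p) | x.2 ∈ U18 p} := by
  refine ⟨U_zero, U_one, ?_, ?_, ?_⟩
  · intro x hx y hy
    show (m18 p x y).2 ∈ U18 p
    exact U_m hx hy x.1 y.1
  · intro x hx y hy
    show (ld18 p x y).2 ∈ U18 p
    exact U_ld hx hy x.1 y.1
  · intro x hx y hy
    show (rd18 p x y).2 ∈ U18 p
    exact U_rd hx hy x.1 y.1

end Aux2
section Gen

variable {p : ℕ} [Fact p.Prime] {S : Set (↥(Wt p) × LaurentSeries (ZMod p))}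
variable (hS : isQSub p S)

include hS

lemma gen_g1 : ((tau p, 0) : ↥(Wt p) × LaurentSeries (ZMod p)) ∈ S := hS.1

lemma gen_e : ((0, 0) : ↥(Wt p) × LaurentSeries (ZMod p)) ∈ S := by
  have h := hS.2.2.2.1 _ hS.1 _ hS.1
  have e : ld18 p (⟨⟨tK p, Submodule.mem_span_singleton_self _⟩, 0⟩)
      (⟨⟨tK p, Submodule.mem_span_singleton_self _⟩, 0⟩) = ((0, 0) : ↥(Wt p) × LaurentSeries (ZMod p)) := by
    unfold ld18
    refine Prod.ext (by simp [wsub_self]) (by simp)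
  rwa [e] at h

lemma gen_nat_tau (n : ℕ) : (((n : ZMod p) • tau p, 0) : ↥(Wt p) × LaurentSeries (ZMod p)) ∈ S := by
  induction n with
  | zero => simpa using gen_e hS
  | succ n ih =>
    have h := hS.2.2.1 _ ih _ hS.1
    have e : m18 p ((n : ZMod p) • tau p, 0) (⟨⟨tK p, Submodule.mem_span_singleton_self _⟩, 0⟩)
        = (((((n + 1 : ℕ)) : ZMod p)) • tau p, 0) := by
      unfold m18
      refine Prod.ext ?_ (by simp)
      push_cast
      rw [add_smul, one_smul]
      rfl
    rwa [e] at h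

lemma gen_b0 (b : ↥(Wt p)) : ((b, 0) : ↥(Wt p) × LaurentSeries (ZMod p)) ∈ S := by
  haveI : NeZero p := ⟨(Fact.out : p.Prime).ne_zero⟩
  obtain ⟨c, hc⟩ := wt_rep b
  obtain ⟨n, rfl⟩ := ZMod.natCast_zmod_surjective c
  have e : b = (n : ZMod p) • tau p := Subtype.ext (by simpa using hc)
  rw [e]
  exact gen_nat_tau hS n

lemma gen_sub {u v : LaurentSeries (ZMod p)}
    (hu : ((0 : ↥(Wt p)), u) ∈ S) (hv : ((0 : ↥(Wt p)), v) ∈ S) :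
    ((0 : ↥(Wt p)), v - u) ∈ S := by
  have h := hS.2.2.2.1 _ hu _ hv
  have e : ld18 p ((0 : ↥(Wt p)), u) ((0 : ↥(Wt p)), v) = ((0 : ↥(Wt p)), v - u) := by
    unfold ld18
    refine Prod.ext (by simp [wsub_self]) (by simp)
  rwa [e] at h

lemma gen_neg {u : LaurentSeries (ZMod p)} (hu : ((0 : ↥(Wt p)), u) ∈ S) :
    ((0 : ↥(Wt p)), -u) ∈ S := by
  have h := gen_sub hS hu (gen_e hS)
  rwa [zero_sub] at h

lemma gen_add {u v : LaurentSeries (ZMod p)}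
    (hu : ((0 : ↥(Wt p)), u) ∈ S) (hv : ((0 : ↥(Wt p)), v) ∈ S) :
    ((0 : ↥(Wt p)), v + u) ∈ S := by
  have h := gen_sub hS (gen_neg hS hu) hv
  rwa [sub_neg_eq_add] at h

lemma gen_nsmul {u : LaurentSeries (ZMod p)} (hu : ((0 : ↥(Wt p)), u) ∈ S) (n : ℕ) :
    ((0 : ↥(Wt p)), n • u) ∈ S := by
  induction n with
  | zero => simpa using gen_e hS
  | succ n ih =>
    have h := gen_add hS hu ih
    rwa [← succ_nsmul] at h

lemma gen_smul {u : LaurentSeries (ZMod p)} (hu : ((0 : ↥(Wt p)), u) ∈ S) (c : ZMod p) :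
    ((0 : ↥(Wt p)), c • u) ∈ S := by
  haveI : NeZero p := ⟨(Fact.out : p.Prime).ne_zero⟩
  obtain ⟨n, rfl⟩ := ZMod.natCast_zmod_surjective c
  rw [Nat.cast_smul_eq_nsmul]
  exact gen_nsmul hS hu n

lemma gen_C {v w : LaurentSeries (ZMod p)}
    (hv : ((0 : ↥(Wt p)), v) ∈ S) (hw : ((0 : ↥(Wt p)), w) ∈ S) (a : ↥(Wt p)) :
    ((0 : ↥(Wt p)), (w * (1 + (a : LaurentSeries (ZMod p))) -
      v * (1 - (a : LaurentSeries (ZMod p)))) * (1 - (a : LaurentSeries (ZMod p)))⁻¹) ∈ S := by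
  have e1 := hS.2.2.1 _ (gen_b0 hS a) _ hv
  have e2 := hS.2.2.1 _ hw _ (gen_b0 hS a)
  have h := hS.2.2.2.1 _ e1 _ e2
  have e : ld18 p (m18 p (a, 0) ((0 : ↥(Wt p)), v)) (m18 p ((0 : ↥(Wt p)), w) (a, 0))
      = ((0 : ↥(Wt p)), (w * (1 + (a : LaurentSeries (ZMod p))) -
        v * (1 - (a : LaurentSeries (ZMod p)))) * (1 - (a : LaurentSeries (ZMod p)))⁻¹) := by
    unfold m18 ld18
    refine Prod.ext (by simp [wsub_self]) ?_
    push_cast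
    simp
  rwa [e] at h

end Gen
section Gen2

variable {p : ℕ} [Fact p.Prime] {S : Set (↥(Wt p) × LaurentSeries (ZMod p))}
variable (hS : isQSub p S) (hodd : p ≠ 2)

lemma two_ne_zmod (hodd : p ≠ 2) : (2 : ZMod p) ≠ 0 := by
  haveI : NeZero p := ⟨(Fact.out : p.Prime).ne_zero⟩
  have : ((2 : ℕ) : ZMod p) ≠ 0 := by
    rw [Ne, ZMod.natCast_eq_zero_iff]
    intro hdvd
    exact hodd ((Nat.prime_dvd_prime_iff_eq (Fact.out : p.Prime) Nat.prime_two).mp hdvd)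
  simpa using this

include hS hodd

lemma gen_pair {v : LaurentSeries (ZMod p)} (hv : ((0 : ↥(Wt p)), v) ∈ S) (b : ↥(Wt p)) :
    ((b, v) : ↥(Wt p) × LaurentSeries (ZMod p)) ∈ S := by
  set B := (b : LaurentSeries (ZMod p)) with hB
  have hBne : (1 : LaurentSeries (ZMod p)) - B ≠ 0 := one_sub_coe_ne b
  have hv' := gen_C hS hv hv b
  have hw := gen_smul hS hv' (-(2⁻¹ : ZMod p))
  set w := (-(2⁻¹ : ZMod p)) • ((v * (1 + B) - v * (1 - B)) * (1 - B)⁻¹) with hw_def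
  have hwv : w * (1 - B) = -(v * B) := by
    rw [hw_def, smul_eq_alg, map_neg, map_inv₀]
    have h2 : algebraMap (ZMod p) (LaurentSeries (ZMod p)) (2 : ZMod p) = 2 := by
      rw [map_ofNat]
    have h2K : (2 : LaurentSeries (ZMod p)) ≠ 0 := by
      rw [← h2]
      intro hcon
      exact two_ne_zmod hodd ((algebraMap (ZMod p) (LaurentSeries (ZMod p))).injective
        (by rw [hcon, map_zero]))
    rw [h2]
    field_simp
    linear_combination (0 : LaurentSeries (ZMod p)) * inv_mul_cancel₀ h2K
  have h := hS.2.2.1 _ hv _ (hS.2.2.1 _ (gen_b0 hS b) _ hw)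
  have e : m18 p ((0 : ↥(Wt p)), v) (m18 p (b, 0) ((0 : ↥(Wt p)), w)) = (b, v) := by
    unfold m18
    refine Prod.ext (by simp) ?_
    push_cast
    rw [hwv]
    ring
  rwa [e] at h

lemma gen_mul1 {v : LaurentSeries (ZMod p)} (hv : ((0 : ↥(Wt p)), v) ∈ S) (b : ↥(Wt p)) :
    ((0 : ↥(Wt p)), v * (1 - (b : LaurentSeries (ZMod p)))) ∈ S := by
  have h := hS.2.2.1 _ (gen_pair hS hodd hv b) _ (gen_b0 hS (-b))
  have e : m18 p (b, v) ((-b : ↥(Wt p)), 0)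
      = ((0 : ↥(Wt p)), v * (1 - (b : LaurentSeries (ZMod p)))) := by
    unfold m18
    refine Prod.ext (by simp [wadd_neg]) ?_
    push_cast
    ring
  rwa [e] at h

lemma gen_div1 {v : LaurentSeries (ZMod p)} (hv : ((0 : ↥(Wt p)), v) ∈ S) (b : ↥(Wt p)) :
    ((0 : ↥(Wt p)), v * (1 + (b : LaurentSeries (ZMod p)))⁻¹) ∈ S := by
  have h := hS.2.2.2.2 _ (gen_pair hS hodd hv b) _ (gen_b0 hS b)
  have e : rd18 p (b, v) (b, 0)
      = ((0 : ↥(Wt p)), v * (1 + (b : LaurentSeries (ZMod p)))⁻¹) := by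
    unfold rd18
    refine Prod.ext (by simp [wsub_self]) ?_
    push_cast
    simp
  rwa [e] at h

lemma gen_mul_t {v : LaurentSeries (ZMod p)} (hv : ((0 : ↥(Wt p)), v) ∈ S) :
    ((0 : ↥(Wt p)), v * tK p) ∈ S := by
  have h := gen_sub hS hv (gen_mul1 hS hodd hv (-(tau p)))
  have e : v * (1 - ((-(tau p) : ↥(Wt p)) : LaurentSeries (ZMod p))) - v = v * tK p := by
    push_cast [coe_tau]
    ring
  rwa [e] at h

lemma gen_pow_t (n : ℕ) : ((0 : ↥(Wt p)), (tK p) ^ n) ∈ S := by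
  induction n with
  | zero => simpa using hS.2.1
  | succ n ih =>
    have h := gen_mul_t hS hodd ih
    rwa [← pow_succ] at h

lemma gen_poly (f : Polynomial (ZMod p)) :
    ((0 : ↥(Wt p)), Polynomial.aeval (tK p) f) ∈ S := by
  induction f using Polynomial.induction_on' with
  | add f g hf hg =>
    rw [map_add]
    exact gen_add hS hg hf
  | monomial n c =>
    rw [Polynomial.aeval_monomial, ← smul_eq_alg]
    exact gen_smul hS (gen_pow_t hS hodd n) c

lemma gen_divg {g : Polynomial (ZMod p)}
    (hg : g ∈ Submonoid.closure {h : Polynomial (ZMod p) |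
      ∃ i : ZMod p, h = 1 + Polynomial.C i * Polynomial.X}) :
    ∀ v : LaurentSeries (ZMod p), ((0 : ↥(Wt p)), v) ∈ S →
      ((0 : ↥(Wt p)), v / Polynomial.aeval (tK p) g) ∈ S := by
  induction hg using Submonoid.closure_induction with
  | mem x hx =>
    intro v hv
    obtain ⟨i, rfl⟩ := hx
    rw [aeval_gen, div_eq_mul_inv]
    have h := gen_div1 hS hodd hv (i • tau p)
    have e : ((i • tau p : ↥(Wt p)) : LaurentSeries (ZMod p)) = i • tK p := by push_cast; rfl
    rwa [e] at h
  | one => intro v hv; rwa [map_one, div_one]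
  | mul x y hx hy ihx ihy =>
    intro v hv
    rw [map_mul, div_mul_eq_div_div]
    exact ihy _ (ihx _ hv)

lemma gen_U {v : LaurentSeries (ZMod p)} (hv : v ∈ U18 p) :
    ((0 : ↥(Wt p)), v) ∈ S := by
  obtain ⟨f, g, hg, rfl⟩ := hv
  exact gen_divg hS hodd hg _ (gen_poly hS hodd f)

lemma gen_main (x : ↥(Wt p) × LaurentSeries (ZMod p)) (hx : x.2 ∈ U18 p) : x ∈ S := by
  have h := gen_pair hS hodd (gen_U hS hodd hx) x.1
  simpa using h

end Gen2
section Final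

variable {p : ℕ} [Fact p.Prime]

lemma L18_eq (hodd : p ≠ 2) :
    L18 p = {x : ↥(Wt p) × LaurentSeries (ZMod p) | x.2 ∈ U18 p} := by
  apply subset_antisymm
  · intro x hx
    exact hx _ S0_isQSub
  · intro x hx T hT
    exact gen_main hT hodd x hx

lemma tK_pow (n : ℕ) : (tK p) ^ n = HahnSeries.single (n : ℤ) (1 : ZMod p) := by
  unfold tK
  rw [HahnSeries.single_pow]
  norm_num

lemma tK_ne : tK p ≠ 0 := by
  unfold tK
  exact HahnSeries.single_ne_zero one_ne_zero

lemma L18_infinite (hodd : p ≠ 2) : (L18 p).Infinite := by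
  rw [L18_eq hodd]
  apply Set.infinite_of_injective_forall_mem
    (f := fun n : ℕ => (((0 : ↥(Wt p)), (tK p) ^ n) : ↥(Wt p) × LaurentSeries (ZMod p)))
  · intro n m hnm
    by_contra hne
    have h2 := congrArg (fun z : (↥(Wt p) × LaurentSeries (ZMod p)) => (z.2).coeff (n : ℤ)) hnm
    simp only [tK_pow] at h2
    rw [HahnSeries.coeff_single_same, HahnSeries.coeff_single_of_ne (by exact_mod_cast hne)] at h2
    exact one_ne_zero h2
  · intro n
    exact U_tpow n

lemma L18_nonassoc : ∃ x ∈ L18 p, ∃ y ∈ L18 p, ∃ z ∈ L18 p,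
    m18 p (m18 p x y) z ≠ m18 p x (m18 p y z) := by
  refine ⟨((0 : ↥(Wt p)), 1), fun T hT => hT.2.1, (tau p, 0), fun T hT => hT.1,
    (tau p, 0), fun T hT => hT.1, ?_⟩
  have e1 : m18 p (m18 p ((0 : ↥(Wt p)), (1 : LaurentSeries (ZMod p))) (tau p, 0)) (tau p, 0)
      = (tau p + tau p, (1 + tK p) * (1 + tK p)) := by
    unfold m18
    refine Prod.ext (by simp) ?_
    push_cast [coe_tau]
    ring
  have e2 : m18 p ((0 : ↥(Wt p)), (1 : LaurentSeries (ZMod p))) (m18 p (tau p, 0) (tau p, 0))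
      = (tau p + tau p, 1 + (tK p + tK p)) := by
    unfold m18
    refine Prod.ext (by simp) ?_
    push_cast [coe_tau]
    ring
  rw [e1, e2]
  intro hcon
  have h2 := congrArg Prod.snd hcon
  simp only at h2
  have ht2 : tK p * tK p = 0 := by linear_combination h2
  exact mul_ne_zero tK_ne tK_ne ht2

lemma iterate_pow (x : ↥(Wt p) × LaurentSeries (ZMod p)) (n : ℕ) :
    (fun y => m18 p y x)^[n] (0, 0) = (n • x.1, n • x.2) := by
  induction n with
  | zero => simp [zero_nsmul]
  | succ n ih =>
    rw [Function.iterate_succ_apply', ih]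
    unfold m18
    refine Prod.ext (by exact (succ_nsmul x.1 n).symm) ?_
    have hc : ((n • x.1 : ↥(Wt p)) : LaurentSeries (ZMod p))
        = (n : LaurentSeries (ZMod p)) * (x.1 : LaurentSeries (ZMod p)) := by
      push_cast
      rw [nsmul_eq_mul]
    show (n • x.2) * (1 + (x.1 : LaurentSeries (ZMod p))) +
      x.2 * (1 - ((n • x.1 : ↥(Wt p)) : LaurentSeries (ZMod p))) = (n + 1) • x.2
    rw [hc, nsmul_eq_mul, nsmul_eq_mul]
    push_cast
    ring

lemma cast_p_eq_zero : ((p : ℕ) : LaurentSeries (ZMod p)) = 0 := by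
  rw [← map_natCast (algebraMap (ZMod p) (LaurentSeries (ZMod p))) p, ZMod.natCast_self, map_zero]

lemma L18_exponent (x : ↥(Wt p) × LaurentSeries (ZMod p)) :
    (fun y => m18 p y x)^[p] (0, 0) = (0, 0) := by
  rw [iterate_pow]
  refine Prod.ext ?_ ?_
  · apply Subtype.ext
    push_cast
    rw [nsmul_eq_mul, cast_p_eq_zero, zero_mul]
  · show p • x.2 = 0
    rw [nsmul_eq_mul, cast_p_eq_zero, zero_mul]

lemma coeff_one_smul (c : ZMod p) : (c • tK p).coeff 1 = c := by
  have : (c • tK p).coeff 1 = c • (tK p).coeff 1 := rfl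
  rw [this]
  unfold tK
  rw [HahnSeries.coeff_single_same, smul_eq_mul, mul_one]

end Final

/-- for an odd prime `p`, `k = F_p`, `K = F_p((t))`, `W = F_p·t`, the
subloop `L` of `Q = Q_{k<K}(W)` generated by `(t,0)` and `(0,1)` equals `W × U`, where `U`
is the localization of `F_p[t]` at `{1 + it : i ∈ F_p}`. Moreover `L` is infinite,
nonassociative, of exponent `p`, and carries a surjective homomorphism onto the cyclic
group `F_p` (sending `(i·t, u) ↦ i`) whose kernel is the abelian group `(U,+)` sitting in
`L` as `0 × U`. -/
theorem stmt18 (p : ℕ) [Fact p.Prime] (hodd : p ≠ 2) :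
    L18 p = {x : ↥(Wt p) × LaurentSeries (ZMod p) | x.2 ∈ U18 p} ∧
    (L18 p).Infinite ∧
    (∃ x ∈ L18 p, ∃ y ∈ L18 p, ∃ z ∈ L18 p,
      m18 p (m18 p x y) z ≠ m18 p x (m18 p y z)) ∧
    (∀ x ∈ L18 p, (fun y => m18 p y x)^[p] (0, 0) = (0, 0)) ∧
    (∃ h : ↥(Wt p) × LaurentSeries (ZMod p) → ZMod p,
      (∀ x, algebraMap (ZMod p) (LaurentSeries (ZMod p)) (h x) * tK p = (x.1 : LaurentSeries (ZMod p))) ∧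
      (∀ x y, h (m18 p x y) = h x + h y) ∧
      (∀ i : ZMod p, ∃ x ∈ L18 p, h x = i) ∧
      {x ∈ L18 p | h x = 0} = {x | x.1 = 0 ∧ x.2 ∈ U18 p}) := by
  refine ⟨L18_eq hodd, L18_infinite hodd, L18_nonassoc, fun x _ => L18_exponent x, ?_⟩
  refine ⟨fun x => ((x.1 : LaurentSeries (ZMod p))).coeff 1, ?_, ?_, ?_, ?_⟩
  · intro x
    obtain ⟨c, hc⟩ := wt_rep x.1
    show algebraMap (ZMod p) (LaurentSeries (ZMod p)) (((x.1 : LaurentSeries (ZMod p))).coeff 1)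
      * tK p = (x.1 : LaurentSeries (ZMod p))
    rw [hc, coeff_one_smul, ← smul_eq_alg]
  · intro x y
    show (((m18 p x y).1 : ↥(Wt p)) : LaurentSeries (ZMod p)).coeff 1
      = ((x.1 : LaurentSeries (ZMod p))).coeff 1 + ((y.1 : LaurentSeries (ZMod p))).coeff 1
    unfold m18
    push_cast
    rw [HahnSeries.coeff_add]
  · intro i
    refine ⟨(i • tau p, 0), ?_, ?_⟩
    · rw [L18_eq hodd]
      exact U_zero
    · show ((i • tau p : ↥(Wt p)) : LaurentSeries (ZMod p)).coeff 1 = i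
      have e : ((i • tau p : ↥(Wt p)) : LaurentSeries (ZMod p)) = i • tK p := by push_cast; rfl
      rw [e, coeff_one_smul]
  · ext x
    simp only [Set.mem_setOf_eq, Set.mem_sep_iff]
    rw [L18_eq hodd]
    constructor
    · rintro ⟨hx, hx1⟩
      replace hx1 : ((x.1 : LaurentSeries (ZMod p))).coeff 1 = 0 := hx1
      obtain ⟨c, hc⟩ := wt_rep x.1
      rw [hc, coeff_one_smul] at hx1
      refine ⟨Subtype.ext ?_, hx⟩
      rw [hc, hx1, zero_smul]
      rfl
    · rintro ⟨h1, h2⟩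
      refine ⟨h2, ?_⟩
      show ((x.1 : ↥(Wt p)) : LaurentSeries (ZMod p)).coeff 1 = 0
      rw [h1]
      rw [ZeroMemClass.coe_zero, HahnSeries.coeff_zero]
end
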